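/- arXiv:1901.04183 — 6 statements merged into one kernel-verified Lean document; each statement's English description precedes it below -/
import Mathlib

section
/- Consider the sequential assignment problem with random horizon (Problem (AP2)): the optimal expected total reward sup_{π ∈ Π(𝒴̄)} E[∑_{t=1}^{N} p_{π_t} Y_t] equals the optimal expected total reward of the standard sequential assignment problem (Problem (AP1)) with fixed horizon N_max and independent job sizes Y_t · ∑_{k=t}^{N_max} γ_k, i.e. sup_{π ∈ Π(𝒴̄)} E[∑_{t=1}^{N} p_{π_t} Y_t] = sup_{π ∈ Π(𝒴)} E[∑_{t=1}^{N_max} p_{π_t} Y_t ∑_{k=t}^{N_max} γ_k], where Π(𝒴) is the set of policies adapted to the filtration 𝒴_t = σ(Y_1,…,Y_t). -/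
open MeasureTheory ProbabilityTheory Finset
open scoped ENNReal Classical

noncomputable section

/-- The σ-algebra on `Ω` generated by the functions `f 1, …, f t`. -/
def genFilt {Ω β : Type*} [MeasurableSpace β] (f : ℕ → Ω → β) (t : ℕ) :
    MeasurableSpace Ω :=
  ⨆ i ∈ Set.Icc 1 t, MeasurableSpace.comap (f i) inferInstance

/-- `τ` is a stopping time with values in `{1,…,n}` of the filtration generated by `f`. -/
def IsStopTime {Ω β : Type*} [MeasurableSpace β] (f : ℕ → Ω → β) (n : ℕ) (τ : Ω → ℕ) : Prop :=
  (∀ ω, τ ω ∈ Set.Icc 1 n) ∧ ∀ t, MeasurableSet[genFilt f t] {ω | τ ω = t}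

/-- The family `(f i)_{i ∈ s}` is independent under `μ`. -/
def IndepSeq {Ω β : Type*} [MeasurableSpace Ω] [MeasurableSpace β]
    (f : ℕ → Ω → β) (s : Set ℕ) (μ : Measure Ω) : Prop :=
  iIndepFun (m := fun _ : s => (inferInstance : MeasurableSpace β)) (fun i : s => f i.1) μ

/-- `N` is independent of the family `(f i)_{i ∈ s}`. -/
def IndepOfSeq {Ω β : Type*} [MeasurableSpace Ω] [MeasurableSpace β]
    (N : Ω → ℕ) (f : ℕ → Ω → β) (s : Set ℕ) (μ : Measure Ω) : Prop :=
  IndepFun N (fun ω (i : s) => f i.1 ω) μ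

/-- The absolute rank `A_{t,k}` of `X t` among `X 1, …, X k`
(the largest observation has rank 1). -/
def absRank {Ω : Type*} (X : ℕ → Ω → ℝ) (t k : ℕ) (ω : Ω) : ℕ :=
  ((Finset.Icc 1 k).filter fun j => X t ω ≤ X j ω).card

/-- The relative rank `R_t = A_{t,t}`. -/
def relRank {Ω : Type*} (X : ℕ → Ω → ℝ) (t : ℕ) (ω : Ω) : ℕ := absRank X t t ω

/-- `(X i)_{i ∈ s}` are i.i.d. with an atomless (continuous) common distribution. -/
def IIDContinuousOn {Ω : Type*} [MeasurableSpace Ω] (X : ℕ → Ω → ℝ) (s : Set ℕ)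
    (μ : Measure Ω) : Prop :=
  (∀ i ∈ s, Measurable (X i)) ∧ IndepSeq X s μ ∧
  (∀ i ∈ s, ∀ j ∈ s, IdentDistrib (X i) (X j) μ μ) ∧
  (∀ i ∈ s, ∀ x : ℝ, μ {ω | X i ω = x} = 0)

/-!
On the event `{t ≤ N}` the observations `Ybar 1, …, Ybar t` coincide with `Y 1, …, Y t`. Hence a
policy adapted to either filtration can be traded for one adapted to the other that makes the same
choices up to the horizon: run the same decision rules on the other observations and repair them
greedily into a permutation. For a `Y`-adapted policy the reward `p (π t) * Y t` is a function of
`(Y 1, …, Y Nmax)`, which is independent of `N`, so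
`E[1{t ≤ N} p(π t) Y t] = P(N ≥ t) E[p(π t) Y t]` with `P(N ≥ t) = ∑_{k ≥ t} γ k`. The two
problems therefore have the same sets of attainable values.
-/

namespace SequentialAssignment

section Greedy

variable (n : ℕ)

def greedyPick (used : Finset ℕ) (a : ℕ) : ℕ :=
  if a ∈ Icc 1 n \ used then a
  else if h : (Icc 1 n \ used).Nonempty then (Icc 1 n \ used).min' h else 0

def greedyUsed (d : ℕ → ℕ) : ℕ → Finset ℕ
  | 0 => ∅
  | t + 1 => insert (greedyPick n (greedyUsed d t) (d (t + 1))) (greedyUsed d t)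

def greedyPerm (d : ℕ → ℕ) (t : ℕ) : ℕ :=
  greedyPick n (greedyUsed n d (t - 1)) (d t)

variable {n}

lemma greedyPick_mem {used : Finset ℕ} (h : (Icc 1 n \ used).Nonempty) (a : ℕ) :
    greedyPick n used a ∈ Icc 1 n \ used := by
  unfold greedyPick
  split_ifs with ha
  · exact ha
  · exact min'_mem _ h

lemma greedyUsed_eq_image (d : ℕ → ℕ) (t : ℕ) :
    greedyUsed n d t = (Icc 1 t).image (greedyPerm n d) := by
  induction t with
  | zero => rfl
  | succ t ih =>
    rw [← insert_Icc_right_eq_Icc_add_one (by omega), image_insert, greedyUsed, ← ih]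
    rfl

lemma card_greedyUsed_le (d : ℕ → ℕ) (t : ℕ) : #(greedyUsed n d t) ≤ t := by
  rw [greedyUsed_eq_image]
  exact card_image_le.trans (by simp)

lemma greedyPerm_mem_sdiff (d : ℕ → ℕ) {t : ℕ} (ht : t ∈ Icc 1 n) :
    greedyPerm n d t ∈ Icc 1 n \ greedyUsed n d (t - 1) := by
  refine greedyPick_mem ?_ _
  rw [← card_pos]
  have := le_card_sdiff (greedyUsed n d (t - 1)) (Icc 1 n)
  have := card_greedyUsed_le (n := n) d (t - 1)
  simp only [Nat.card_Icc, mem_Icc] at *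
  omega

lemma greedyPerm_bijOn (d : ℕ → ℕ) :
    Set.BijOn (greedyPerm n d) (Set.Icc 1 n) (Set.Icc 1 n) := by
  have hmem : ∀ t ∈ Set.Icc 1 n, greedyPerm n d t ∈ Icc 1 n \ greedyUsed n d (t - 1) :=
    fun t ht => greedyPerm_mem_sdiff d (by simpa using ht)
  have hmaps : Set.MapsTo (greedyPerm n d) (Set.Icc 1 n) (Set.Icc 1 n) := fun t ht => by
    simpa using (mem_sdiff.mp (hmem t ht)).1
  refine ((Set.finite_Icc 1 n).injOn_iff_bijOn_of_mapsTo hmaps).mp ?_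
  suffices ∀ s ∈ Set.Icc 1 n, ∀ t ∈ Set.Icc 1 n, s < t → greedyPerm n d s ≠ greedyPerm n d t by
    intro s hs t ht hst
    by_contra hne
    rcases lt_or_gt_of_ne hne with h | h
    exacts [this s hs t ht h hst, this t ht s hs h hst.symm]
  intro s hs t ht hst heq
  have hs_used : greedyPerm n d s ∈ greedyUsed n d (t - 1) := by
    rw [greedyUsed_eq_image]
    exact mem_image_of_mem _ (mem_Icc.mpr ⟨hs.1, by omega⟩)
  exact (mem_sdiff.mp (hmem t ht)).2 (heq ▸ hs_used)

lemma greedyPerm_eq_of_injOn {d : ℕ → ℕ} {t : ℕ}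
    (hmaps : Set.MapsTo d (Set.Icc 1 t) (Set.Icc 1 n)) (hinj : Set.InjOn d (Set.Icc 1 t)) :
    ∀ s ∈ Set.Icc 1 t, greedyPerm n d s = d s := by
  intro s
  induction s using Nat.strong_induction_on with
  | _ s ih =>
    rintro hs
    obtain ⟨hs1, hst⟩ := hs
    have hused : greedyUsed n d (s - 1) = (Icc 1 (s - 1)).image d := by
      rw [greedyUsed_eq_image]
      refine image_congr fun r hr => ?_
      rw [coe_Icc, Set.mem_Icc] at hr
      exact ih r (by omega) ⟨hr.1, by omega⟩
    have hfree : d s ∈ Icc 1 n \ greedyUsed n d (s - 1) := by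
      rw [hused, mem_sdiff, mem_image]
      refine ⟨by simpa using hmaps ⟨hs1, hst⟩, fun ⟨r, hr, hrs⟩ => ?_⟩
      rw [mem_Icc] at hr
      have := hinj ⟨hr.1, by omega⟩ ⟨hs1, hst⟩ hrs
      omega
    rw [greedyPerm, greedyPick, if_pos hfree]

lemma greedyUsed_congr {d d' : ℕ → ℕ} {t : ℕ} (h : ∀ s ≤ t, d s = d' s) :
    greedyUsed n d t = greedyUsed n d' t := by
  induction t with
  | zero => rfl
  | succ t ih =>
    rw [greedyUsed, greedyUsed, ih fun s hs => h s (by omega), h (t + 1) le_rfl]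

lemma greedyPerm_congr {d d' : ℕ → ℕ} {t : ℕ} (h : ∀ s ≤ t, d s = d' s) :
    greedyPerm n d t = greedyPerm n d' t := by
  rw [greedyPerm, greedyPerm, greedyUsed_congr fun s hs => h s (by omega), h t le_rfl]

lemma measurable_greedyPerm {α : Type*} {m : MeasurableSpace α} {c : ℕ → α → ℕ} {t : ℕ}
    (hc : ∀ s ≤ t, Measurable (c s)) : Measurable fun a => greedyPerm n (fun s => c s a) t := by
  let G : (Fin (t + 1) → ℕ) → ℕ := fun w =>
    greedyPerm n (fun s => if h : s < t + 1 then w ⟨s, h⟩ else 0) t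
  have hG : (fun a => greedyPerm n (fun s => c s a) t) = G ∘ fun a (s : Fin (t + 1)) => c s a := by
    funext a
    exact greedyPerm_congr fun s hs => by simp [Nat.lt_succ_of_le hs]
  rw [hG]
  exact (measurable_of_countable G).comp
    (measurable_pi_lambda _ fun s => hc s (Nat.lt_succ_iff.mp s.2))

end Greedy

section History

variable {Ω β : Type*} [MeasurableSpace β] (f : ℕ → Ω → β)

def history (t : ℕ) (ω : Ω) : Set.Icc 1 t → β := fun i => f i ω

lemma genFilt_mono {s t : ℕ} (h : s ≤ t) : genFilt f s ≤ genFilt f t :=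
  biSup_mono fun _ hi => Set.Icc_subset_Icc_right h hi

lemma genFilt_le [MeasurableSpace Ω] (hf : ∀ i, Measurable (f i)) (t : ℕ) :
    genFilt f t ≤ ‹MeasurableSpace Ω› :=
  iSup₂_le fun i _ => (hf i).comap_le

lemma measurable_genFilt {i t : ℕ} (hi : i ∈ Set.Icc 1 t) : Measurable[genFilt f t] (f i) :=
  Measurable.of_comap_le (le_biSup (fun i => MeasurableSpace.comap (f i) inferInstance) hi)

lemma measurable_history (t : ℕ) : Measurable[genFilt f t] (history f t) :=
  @measurable_pi_lambda _ _ _ (genFilt f t) _ _ fun i => measurable_genFilt f i.2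

lemma genFilt_le_comap_history {s t : ℕ} (h : s ≤ t) :
    genFilt f s ≤ MeasurableSpace.comap (history f t) MeasurableSpace.pi := by
  refine iSup₂_le fun i hi => ?_
  have hfi : f i = (fun v : Set.Icc 1 t → β => v ⟨i, hi.1, hi.2.trans h⟩) ∘ history f t := rfl
  rw [hfi, ← MeasurableSpace.comap_comp]
  exact MeasurableSpace.comap_mono (measurable_pi_apply _).comap_le

end History

section Transfer

variable {Ω β : Type*} [MeasurableSpace β]

lemma measurable_of_measurableSet_eq {f : ℕ → Ω → β} {π : ℕ → Ω → ℕ}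
    (hπ : ∀ t j, MeasurableSet[genFilt f t] {ω | π t ω = j}) (t : ℕ) :
    Measurable[genFilt f t] (π t) :=
  @measurable_to_countable' _ _ _ _ (genFilt f t) _ fun j => hπ t j

theorem exists_policy_eq_of_history_eq {n : ℕ} {U W : ℕ → Ω → β} {σ : ℕ → Ω → ℕ}
    (hbij : ∀ ω, Set.BijOn (fun t => σ t ω) (Set.Icc 1 n) (Set.Icc 1 n))
    (hσ : ∀ t j, MeasurableSet[genFilt U t] {ω | σ t ω = j}) :
    ∃ τ : ℕ → Ω → ℕ, (∀ ω, Set.BijOn (fun t => τ t ω) (Set.Icc 1 n) (Set.Icc 1 n)) ∧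
      (∀ t j, MeasurableSet[genFilt W t] {ω | τ t ω = j}) ∧
      ∀ ω, ∀ t ∈ Set.Icc 1 n, (∀ i ∈ Set.Icc 1 t, U i ω = W i ω) → τ t ω = σ t ω := by
  have hfactor (t : ℕ) : ∃ F : (Set.Icc 1 t → β) → ℕ, Measurable F ∧ σ t = F ∘ history U t :=
    ((measurable_of_measurableSet_eq hσ t).mono (genFilt_le_comap_history U le_rfl)
      le_rfl).exists_eq_measurable_comp
  choose F hF hσF using hfactor
  -- Run the decision rules of `σ` on the observations `W`; where the resulting choices are not a
  -- permutation, the greedy repair makes them one.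
  refine ⟨fun t ω => greedyPerm n (fun s => F s (history W s ω)) t,
    fun ω => greedyPerm_bijOn _, fun t j => ?_, fun ω t ht hUW => ?_⟩
  · refine measurable_greedyPerm (m := genFilt W t) (fun s hs => ?_) (measurableSet_singleton j)
    exact (hF s).comp ((measurable_history W s).mono (genFilt_mono W hs) le_rfl)
  · have hrule : ∀ s ≤ t, F s (history W s ω) = σ s ω := fun s hs => by
      rw [hσF s]
      congr 1
      funext i
      exact (hUW i ⟨i.2.1, i.2.2.trans hs⟩).symm
    have hsub : Set.Icc 1 t ⊆ Set.Icc 1 n := Set.Icc_subset_Icc_right ht.2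
    dsimp only
    rw [greedyPerm_congr hrule]
    exact greedyPerm_eq_of_injOn ((hbij ω).mapsTo.mono_left hsub) ((hbij ω).injOn.mono hsub) t
      ⟨ht.1, le_rfl⟩

end Transfer

section Reward

variable {Ω : Type*} [MeasurableSpace Ω] {μ : Measure Ω}

lemma integral_indicator_preimage_of_indepFun {α : Type*} [MeasurableSpace α] {N : Ω → α}
    {X : Ω → ℝ} (hNX : IndepFun N X μ) (hN : Measurable N) (hX : AEStronglyMeasurable X μ)
    {S : Set α} (hS : MeasurableSet S) :
    ∫ ω, (N ⁻¹' S).indicator X ω ∂μ = μ.real (N ⁻¹' S) * ∫ ω, X ω ∂μ := by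
  have hind : IndepFun (fun ω => S.indicator (1 : α → ℝ) (N ω)) X μ :=
    hNX.comp (measurable_one.indicator hS) measurable_id
  have hmeas : AEStronglyMeasurable (fun ω => S.indicator (1 : α → ℝ) (N ω)) μ :=
    ((measurable_one.indicator hS).comp hN).aestronglyMeasurable
  calc ∫ ω, (N ⁻¹' S).indicator X ω ∂μ = ∫ ω, S.indicator 1 (N ω) * X ω ∂μ := by
        congr 1; funext ω
        by_cases h : N ω ∈ S <;> simp [h]
    _ = μ.real (N ⁻¹' S) * ∫ ω, X ω ∂μ := by
        rw [hind.integral_fun_mul_eq_mul_integral hmeas hX]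
        congr 1
        exact integral_indicator_one (hN hS)

lemma measureReal_preimage_Ici_eq_sum [IsFiniteMeasure μ] {N : Ω → ℕ} (hN : Measurable N) {n : ℕ}
    (hNn : ∀ ω, N ω ≤ n) (t : ℕ) :
    μ.real (N ⁻¹' Set.Ici t) = ∑ k ∈ Icc t n, μ.real {ω | N ω = k} := by
  have hpre : N ⁻¹' Set.Ici t = N ⁻¹' (Icc t n : Set ℕ) := by
    ext ω
    simp [hNn ω]
  rw [hpre, ← sum_measureReal_preimage_singleton _ fun k _ => hN (measurableSet_singleton k)]
  rfl

theorem integral_sum_Icc_random_horizon [IsFiniteMeasure μ] {n : ℕ} {N : Ω → ℕ}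
    (hN : Measurable N) (hNn : ∀ ω, N ω ≤ n) {Y : ℕ → Ω → ℝ} (hY : ∀ t, Measurable (Y t))
    (hYint : ∀ t ∈ Set.Icc 1 n, Integrable (Y t) μ) (hNY : IndepFun N (history Y n) μ)
    (p : ℕ → ℝ) {π : ℕ → Ω → ℕ}
    (hπn : ∀ ω, Set.MapsTo (fun t => π t ω) (Set.Icc 1 n) (Set.Icc 1 n))
    (hπ : ∀ t j, MeasurableSet[genFilt Y t] {ω | π t ω = j}) :
    ∫ ω, ∑ t ∈ Icc 1 (N ω), p (π t ω) * Y t ω ∂μ =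
      ∫ ω, ∑ t ∈ Icc 1 n, p (π t ω) * (Y t ω * ∑ k ∈ Icc t n, μ.real {ω | N ω = k}) ∂μ := by
  set X : ℕ → Ω → ℝ := fun t ω => p (π t ω) * Y t ω with hXdef
  have hX_adapted (t : ℕ) (ht : t ∈ Set.Icc 1 n) : Measurable[genFilt Y t] (X t) :=
    ((measurable_from_nat (f := p)).comp (measurable_of_measurableSet_eq hπ t)).mul
      (measurable_genFilt Y ⟨ht.1, le_rfl⟩)
  have hX_meas (t : ℕ) (ht : t ∈ Set.Icc 1 n) : AEStronglyMeasurable (X t) μ :=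
    ((hX_adapted t ht).mono (genFilt_le Y hY t) le_rfl).aestronglyMeasurable
  have hX_indep (t : ℕ) (ht : t ∈ Set.Icc 1 n) : IndepFun N (X t) μ := by
    obtain ⟨φ, hφ, hXφ⟩ := ((hX_adapted t ht).mono (genFilt_le_comap_history Y ht.2)
      le_rfl).exists_eq_measurable_comp
    rw [hXφ]
    exact hNY.comp measurable_id hφ
  have hX_int (t : ℕ) (ht : t ∈ Set.Icc 1 n) : Integrable (X t) μ := by
    refine (hYint t ht).bdd_mul (c := ∑ j ∈ Icc 1 n, |p j|)
      ((measurable_from_nat.comp ((measurable_of_measurableSet_eq hπ t).mono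
        (genFilt_le Y hY t) le_rfl)).aestronglyMeasurable) (ae_of_all _ fun ω => ?_)
    exact single_le_sum (f := fun j => |p j|) (fun j _ => abs_nonneg _)
      (by simpa using hπn ω ht)
  have hsum (ω : Ω) :
      ∑ t ∈ Icc 1 (N ω), X t ω = ∑ t ∈ Icc 1 n, (N ⁻¹' Set.Ici t).indicator (X t) ω := by
    simp only [Set.indicator_apply, Set.mem_preimage, Set.mem_Ici]
    rw [← sum_filter]
    congr 1
    ext t
    simp only [mem_filter, mem_Icc]
    have := hNn ω
    omega
  calc ∫ ω, ∑ t ∈ Icc 1 (N ω), X t ω ∂μ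
      = ∑ t ∈ Icc 1 n, ∫ ω, (N ⁻¹' Set.Ici t).indicator (X t) ω ∂μ := by
        simp_rw [hsum]
        exact integral_finsetSum _ fun t ht =>
          (hX_int t (by simpa using ht)).indicator (hN measurableSet_Ici)
    _ = ∑ t ∈ Icc 1 n, ∫ ω, X t ω * ∑ k ∈ Icc t n, μ.real {ω | N ω = k} ∂μ := by
        refine sum_congr rfl fun t ht => ?_
        rw [mem_Icc, ← Set.mem_Icc] at ht
        rw [integral_indicator_preimage_of_indepFun (hX_indep t ht) hN (hX_meas t ht)
          measurableSet_Ici, measureReal_preimage_Ici_eq_sum hN hNn, integral_mul_const, mul_comm]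
    _ = _ := by
        rw [← integral_finsetSum _ fun t ht => (hX_int t (by simpa using ht)).mul_const _]
        simp only [hXdef, mul_assoc]

end Reward

end SequentialAssignment

theorem stmt_0_general {Ω : Type*} [MeasurableSpace Ω] (μ : Measure Ω) [IsProbabilityMeasure μ]
    (Nmax : ℕ)
    (N : Ω → ℕ) (hNmeas : Measurable N) (hNrange : ∀ ω, N ω ∈ Set.Icc 1 Nmax)
    (γ : ℕ → ℝ) (hγ : ∀ k, γ k = (μ {ω | N ω = k}).toReal)
    (Y : ℕ → Ω → ℝ) (hYmeas : ∀ t, Measurable (Y t))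
    (hYint : ∀ t ∈ Set.Icc 1 Nmax, Integrable (Y t) μ)
    (hNY : IndepOfSeq N Y (Set.Icc 1 Nmax) μ)
    (Ybar : ℕ → Ω → ℝ) (hYbar : ∀ t ω, Ybar t ω = if t ≤ N ω then Y t ω else 0)
    (p : ℕ → ℝ) :
    sSup {x : ℝ | ∃ π : ℕ → Ω → ℕ,
        (∀ ω, Set.BijOn (fun t => π t ω) (Set.Icc 1 Nmax) (Set.Icc 1 Nmax)) ∧
        (∀ t j, MeasurableSet[genFilt Ybar t] {ω | π t ω = j}) ∧
        x = ∫ ω, ∑ t ∈ Finset.Icc 1 (N ω), p (π t ω) * Y t ω ∂μ}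
      = sSup {x : ℝ | ∃ π : ℕ → Ω → ℕ,
        (∀ ω, Set.BijOn (fun t => π t ω) (Set.Icc 1 Nmax) (Set.Icc 1 Nmax)) ∧
        (∀ t j, MeasurableSet[genFilt Y t] {ω | π t ω = j}) ∧
        x = ∫ ω, ∑ t ∈ Finset.Icc 1 Nmax,
              p (π t ω) * (Y t ω * ∑ k ∈ Finset.Icc t Nmax, γ k) ∂μ} := by
  obtain rfl : γ = fun k => μ.real {ω | N ω = k} := funext hγ
  have hreward {π : ℕ → Ω → ℕ}
      (hbij : ∀ ω, Set.BijOn (fun t => π t ω) (Set.Icc 1 Nmax) (Set.Icc 1 Nmax))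
      (hπ : ∀ t j, MeasurableSet[genFilt Y t] {ω | π t ω = j}) :=
    SequentialAssignment.integral_sum_Icc_random_horizon hNmeas (fun ω => (hNrange ω).2) hYmeas
      hYint hNY p (fun ω => (hbij ω).mapsTo) hπ
  have hsame {π π' : ℕ → Ω → ℕ}
      (h : ∀ ω, ∀ t ∈ Set.Icc 1 Nmax, (∀ i ∈ Set.Icc 1 t, Ybar i ω = Y i ω) → π t ω = π' t ω) :
      ∫ ω, ∑ t ∈ Icc 1 (N ω), p (π t ω) * Y t ω ∂μ =
        ∫ ω, ∑ t ∈ Icc 1 (N ω), p (π' t ω) * Y t ω ∂μ := by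
    refine integral_congr_ae (ae_of_all _ fun ω => sum_congr rfl fun t ht => ?_)
    rw [mem_Icc] at ht
    rw [h ω t ⟨ht.1, ht.2.trans (hNrange ω).2⟩ fun i hi => by
      rw [hYbar, if_pos (hi.2.trans ht.2)]]
  congr 1
  ext x
  constructor
  · rintro ⟨π, hbij, hπ, rfl⟩
    obtain ⟨π', hbij', hπ', hagree⟩ :=
      SequentialAssignment.exists_policy_eq_of_history_eq (W := Y) hbij hπ
    exact ⟨π', hbij', hπ', by
      rw [← hreward hbij' hπ', hsame fun ω t ht h => (hagree ω t ht h).symm]⟩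
  · rintro ⟨π, hbij, hπ, rfl⟩
    obtain ⟨π', hbij', hπ', hagree⟩ :=
      SequentialAssignment.exists_policy_eq_of_history_eq (W := Ybar) hbij hπ
    exact ⟨π', hbij', hπ', by
      rw [← hreward hbij hπ, hsame fun ω t ht h => hagree ω t ht fun i hi => (h i hi).symm]⟩

/-- the sequential assignment problem with random horizon (Problem (AP2))
has the same optimal expected total reward as the fixed-horizon problem (AP1) with
horizon `Nmax` and job sizes `Y_t · ∑_{k=t}^{Nmax} γ_k`. -/
theorem stmt_0 {Ω : Type*} [MeasurableSpace Ω] (μ : Measure Ω) [IsProbabilityMeasure μ]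
    (Nmax : ℕ) (hNmax : 1 ≤ Nmax)
    (N : Ω → ℕ) (hNmeas : Measurable N) (hNrange : ∀ ω, N ω ∈ Set.Icc 1 Nmax)
    (γ : ℕ → ℝ) (hγ : ∀ k, γ k = (μ {ω | N ω = k}).toReal)
    (Y : ℕ → Ω → ℝ) (hYmeas : ∀ t, Measurable (Y t))
    (hYint : ∀ t ∈ Set.Icc 1 Nmax, Integrable (Y t) μ)
    (hYindep : IndepSeq Y (Set.Icc 1 Nmax) μ)
    (hY0 : ∀ t ∈ Set.Icc 1 Nmax, μ {ω | Y t ω = 0} = 0)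
    (hNY : IndepOfSeq N Y (Set.Icc 1 Nmax) μ)
    (Ybar : ℕ → Ω → ℝ) (hYbar : ∀ t ω, Ybar t ω = if t ≤ N ω then Y t ω else 0)
    (p : ℕ → ℝ) (hp : MonotoneOn p (Set.Icc 1 Nmax)) :
    sSup {x : ℝ | ∃ π : ℕ → Ω → ℕ,
        (∀ ω, Set.BijOn (fun t => π t ω) (Set.Icc 1 Nmax) (Set.Icc 1 Nmax)) ∧
        (∀ t j, MeasurableSet[genFilt Ybar t] {ω | π t ω = j}) ∧
        x = ∫ ω, ∑ t ∈ Finset.Icc 1 (N ω), p (π t ω) * Y t ω ∂μ}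
      = sSup {x : ℝ | ∃ π : ℕ → Ω → ℕ,
        (∀ ω, Set.BijOn (fun t => π t ω) (Set.Icc 1 Nmax) (Set.Icc 1 Nmax)) ∧
        (∀ t j, MeasurableSet[genFilt Y t] {ω | π t ω = j}) ∧
        x = ∫ ω, ∑ t ∈ Finset.Icc 1 Nmax,
              p (π t ω) * (Y t ω * ∑ k ∈ Finset.Icc t Nmax, γ k) ∂μ} :=
  stmt_0_general μ Nmax N hNmeas hNrange γ hγ Y hYmeas hYint hNY Ybar hYbar p
end
end

section
/- Let R_1,…,R_ν be independent with R_t uniformly distributed on {1,…,t}, let U_t : {1,…,t} → ℝ be given functions, and set Y_t = U_t(R_t). Define b_1 = −∞, b_2 = (1/ν) ∑_{r=1}^{ν} U_ν(r), and b_{t+1} = (1/(ν−t+1)) ∑_{r=1}^{ν−t+1} max(b_t, U_{ν−t+1}(r)) for t = 2,…,ν. Let τ* = min{1 ≤ t ≤ ν : Y_t > b_{ν−t+1}}. Then E[Y_{τ*}] = sup over stopping times τ ∈ 𝒯(ℛ) of E[Y_τ] = b_{ν+1}. -/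
/-!
Write `w c = b (ν - c + 1)` for the value of continuing after `c` observations. Backward
induction on `c`: for any stopping time `τ`, the expected payoff collected after time `c` is at
most `P(τ > c) · w c`. Indeed `{τ > c}` is determined by `R 1, …, R c`, hence independent of
`R (c + 1)`, and on that event stopping at `c + 1` or continuing earns at most
`max (w (c + 1)) (Y (c + 1))`, whose mean over the uniform `R (c + 1)` is `w c`. The rule `τ*`
stops exactly when `Y (c + 1) > w (c + 1)`, so it attains the maximum at every step.
-/

open MeasureTheory ProbabilityTheory Finset
open scoped ENNReal Classical

noncomputable section

section GenFilt

variable {Ω β : Type*} [MeasurableSpace β] {f : ℕ → Ω → β}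

lemma comap_le_genFilt {i t : ℕ} (hi : i ∈ Set.Icc 1 t) :
    MeasurableSpace.comap (f i) inferInstance ≤ genFilt f t :=
  le_iSup₂ (f := fun i (_ : i ∈ Set.Icc 1 t) => MeasurableSpace.comap (f i) inferInstance) i hi

lemma measurableSet_genFilt_preimage {i t : ℕ} (hi : i ∈ Set.Icc 1 t) {B : Set β}
    (hB : MeasurableSet B) : MeasurableSet[genFilt f t] (f i ⁻¹' B) :=
  comap_le_genFilt hi _ ⟨B, hB, rfl⟩

lemma genFilt_mono : Monotone (genFilt f) := fun _ _ hac =>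
  iSup₂_le fun _ hi => comap_le_genFilt ⟨hi.1, hi.2.trans hac⟩

lemma genFilt_le [MeasurableSpace Ω] (hf : ∀ i, Measurable (f i)) (t : ℕ) :
    genFilt f t ≤ ‹MeasurableSpace Ω› :=
  iSup₂_le fun i _ => (hf i).comap_le

lemma IndepSeq.indep_genFilt_comap [MeasurableSpace Ω] {μ : Measure Ω} {n c t : ℕ}
    (hf : ∀ i, Measurable (f i)) (h : IndepSeq f (Set.Icc 1 n) μ) (hct : c < t) (htn : t ≤ n) :
    Indep (genFilt f c) (MeasurableSpace.comap (f t) inferInstance) μ := by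
  let m := fun i : Set.Icc 1 n => MeasurableSpace.comap (f i) (inferInstance : MeasurableSpace β)
  have hpast_present : Indep (⨆ i ∈ {i : Set.Icc 1 n | (i : ℕ) ≤ c}, m i)
      (⨆ i ∈ {i : Set.Icc 1 n | (i : ℕ) = t}, m i) μ := by
    refine indep_iSup_of_disjoint (m := m) (fun i => (hf i).comap_le) h.iIndep ?_
    exact Set.disjoint_left.2 fun i (hic : (i : ℕ) ≤ c) (hit : (i : ℕ) = t) => by omega
  refine indep_of_indep_of_le_right (indep_of_indep_of_le_left hpast_present ?_) ?_
  · exact iSup₂_le fun i hi =>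
      le_iSup₂ (f := fun (j : Set.Icc 1 n) (_ : (j : ℕ) ≤ c) => m j)
        ⟨i, hi.1, by have := hi.2; omega⟩ hi.2
  · exact le_iSup₂ (f := fun (j : Set.Icc 1 n) (_ : (j : ℕ) = t) => m j)
      ⟨t, by omega, htn⟩ rfl

end GenFilt

section StopTime

variable {Ω : Type*}

lemma measurableSet_eq_iff_measurableSet_lt {F : ℕ → MeasurableSpace Ω} (hF : Monotone F)
    {τ : Ω → ℕ} :
    (∀ t, MeasurableSet[F t] {ω | τ ω = t}) ↔ ∀ t, MeasurableSet[F t] {ω | t < τ ω} := by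
  constructor
  · intro h t
    have hlt : {ω | t < τ ω} = (⋃ s ∈ Finset.range (t + 1), {ω | τ ω = s})ᶜ := by
      ext ω
      simp only [Set.mem_ofPred_eq, Set.mem_compl_iff, Set.mem_iUnion, Finset.mem_range]
      constructor
      · rintro hlt ⟨s, hs, rfl⟩
        omega
      · intro hne
        by_contra hle
        exact hne ⟨τ ω, by omega, rfl⟩
    rw [hlt]
    exact (Finset.measurableSet_biUnion _ fun s hs =>
      hF (Nat.lt_succ_iff.1 (Finset.mem_range.1 hs)) _ (h s)).compl
  · rintro h (_ | s)
    · have heq : {ω | τ ω = 0} = {ω | 0 < τ ω}ᶜ := by ext ω; simp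
      exact heq ▸ (h 0).compl
    · have heq : {ω | τ ω = s + 1} = {ω | s < τ ω} ∩ {ω | s + 1 < τ ω}ᶜ := by
        ext ω; simp only [Set.mem_ofPred_eq, Set.mem_inter_iff, Set.mem_compl_iff]; omega
      exact heq ▸ (hF s.le_succ _ (h s)).inter (h (s + 1)).compl

variable {β : Type*} [MeasurableSpace β] {f : ℕ → Ω → β} {n : ℕ} {τ : Ω → ℕ}

lemma IsStopTime.measurableSet_lt (hτ : IsStopTime f n τ) (t : ℕ) :
    MeasurableSet[genFilt f t] {ω | t < τ ω} :=
  (measurableSet_eq_iff_measurableSet_lt genFilt_mono).1 hτ.2 t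

lemma isStopTime_of_measurableSet_lt (hτ : ∀ ω, τ ω ∈ Set.Icc 1 n)
    (h : ∀ t, MeasurableSet[genFilt f t] {ω | t < τ ω}) : IsStopTime f n τ :=
  ⟨hτ, (measurableSet_eq_iff_measurableSet_lt genFilt_mono).2 h⟩

lemma indicator_stop_add_continue_le (c : ℕ) (x : ℝ) (Y : Ω → ℝ) (ω : Ω) :
    {ω | τ ω = c + 1}.indicator Y ω + {ω | c + 1 < τ ω}.indicator (fun _ => x) ω
      ≤ {ω | c < τ ω}.indicator (fun ω => max x (Y ω)) ω := by
  simp only [Set.indicator_apply, Set.mem_ofPred_eq]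
  split_ifs <;> first | omega | simp

lemma indicator_stop_add_continue_eq {c : ℕ} {x : ℝ} {Y : Ω → ℝ} {ω : Ω}
    (hrule : c < τ ω → (τ ω = c + 1 ↔ x < Y ω)) :
    {ω | τ ω = c + 1}.indicator Y ω + {ω | c + 1 < τ ω}.indicator (fun _ => x) ω
      = {ω | c < τ ω}.indicator (fun ω => max x (Y ω)) ω := by
  by_cases hc : c < τ ω
  · by_cases hxy : x < Y ω
    · have hstop : τ ω = c + 1 := (hrule hc).2 hxy
      simp [hstop, max_eq_right hxy.le]
    · have hcont : c + 1 < τ ω := by have := mt (hrule hc).1 hxy; omega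
      simp [hcont, hcont.ne', hc, max_eq_left (not_lt.1 hxy)]
  · simp [hc, show τ ω ≠ c + 1 by omega, show ¬c + 1 < τ ω by omega]

end StopTime

structure IndepUniformRanks {Ω : Type*} [MeasurableSpace Ω] (μ : Measure Ω) (ν : ℕ)
    (R : ℕ → Ω → ℕ) : Prop where
  measurable : ∀ t, Measurable (R t)
  indep : IndepSeq R (Set.Icc 1 ν) μ
  measure_eq : ∀ t ∈ Set.Icc 1 ν, ∀ r ∈ Set.Icc 1 t, μ {ω | R t ω = r} = (t : ℝ≥0∞)⁻¹
  mem_Icc : ∀ t ∈ Set.Icc 1 ν, ∀ ω, R t ω ∈ Set.Icc 1 t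

namespace IndepUniformRanks

variable {Ω : Type*} [MeasurableSpace Ω] {μ : Measure Ω} {ν : ℕ} {R : ℕ → Ω → ℕ}

lemma integrable_comp (hR : IndepUniformRanks μ ν R) [IsFiniteMeasure μ] {t : ℕ}
    (ht : t ∈ Set.Icc 1 ν) (g : ℕ → ℝ) : Integrable (fun ω => g (R t ω)) μ := by
  refine Integrable.of_bound (measurable_from_nat.comp (hR.measurable t)).aestronglyMeasurable
    (∑ r ∈ Icc 1 t, |g r|) (ae_of_all _ fun ω => ?_)
  rw [Real.norm_eq_abs]
  exact single_le_sum (f := fun r => |g r|) (fun _ _ => abs_nonneg _)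
    (Finset.mem_Icc.2 (hR.mem_Icc t ht ω))

lemma measureReal_inter_eq (hR : IndepUniformRanks μ ν R) [IsFiniteMeasure μ] {A : Set Ω}
    {c t r : ℕ} (hA : MeasurableSet[genFilt R c] A) (hct : c < t) (htν : t ≤ ν)
    (hr : r ∈ Set.Icc 1 t) : μ.real (A ∩ R t ⁻¹' {r}) = μ.real A * (t : ℝ)⁻¹ := by
  have hindep := hR.indep.indep_genFilt_comap hR.measurable hct htν
  rw [measureReal_def, measureReal_def, (Indep_iff _ _ _).1 hindep _ _ hA
    ⟨{r}, measurableSet_singleton r, rfl⟩, ENNReal.toReal_mul]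
  simp [Set.preimage, hR.measure_eq t ⟨by omega, htν⟩ r hr]

lemma integral_indicator_comp (hR : IndepUniformRanks μ ν R) [IsFiniteMeasure μ] {A : Set Ω}
    {c t : ℕ} (hA : MeasurableSet[genFilt R c] A) (hct : c < t) (htν : t ≤ ν) (g : ℕ → ℝ) :
    ∫ ω, A.indicator (fun ω => g (R t ω)) ω ∂μ
      = μ.real A * ((t : ℝ)⁻¹ * ∑ r ∈ Icc 1 t, g r) := by
  have hmeas : ∀ r, MeasurableSet (A ∩ R t ⁻¹' {r}) := fun r =>
    (genFilt_le hR.measurable c _ hA).inter (hR.measurable t (measurableSet_singleton r))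
  have hsplit : A.indicator (fun ω => g (R t ω))
      = fun ω => ∑ r ∈ Icc 1 t, (A ∩ R t ⁻¹' {r}).indicator (fun _ => g r) ω := by
    funext ω
    rw [sum_eq_single_of_mem (R t ω) (Finset.mem_Icc.2 (hR.mem_Icc t ⟨by omega, htν⟩ ω))]
    · by_cases hω : ω ∈ A <;> simp [hω]
    · exact fun r _ hne => Set.indicator_of_notMem (fun h => hne h.2.symm) _
  rw [hsplit, integral_finsetSum _ fun r _ => (integrable_const (g r)).indicator (hmeas r),
    mul_sum, mul_sum]
  refine sum_congr rfl fun r hr => ?_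
  rw [integral_indicator_const _ (hmeas r), smul_eq_mul,
    hR.measureReal_inter_eq hA hct htν (Finset.mem_Icc.1 hr), mul_assoc]

end IndepUniformRanks

section OptimalStopping

variable {Ω : Type*} [MeasurableSpace Ω] {μ : Measure Ω} {ν : ℕ} {R : ℕ → Ω → ℕ}
  {U : ℕ → ℕ → ℝ} {τ : Ω → ℕ}

def payoffAfter (μ : Measure Ω) (R : ℕ → Ω → ℕ) (U : ℕ → ℕ → ℝ) (τ : Ω → ℕ) (ν c : ℕ) : ℝ :=
  ∑ s ∈ Ioc c ν, ∫ ω, {ω | τ ω = s}.indicator (fun ω => U s (R s ω)) ω ∂μ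

lemma IsStopTime.integral_eq_payoffAfter_zero [IsFiniteMeasure μ] (hR : IndepUniformRanks μ ν R)
    (hτ : IsStopTime R ν τ) :
    ∫ ω, U (τ ω) (R (τ ω) ω) ∂μ = payoffAfter μ R U τ ν 0 := by
  have hsplit : (fun ω => U (τ ω) (R (τ ω) ω))
      = fun ω => ∑ s ∈ Ioc 0 ν, {ω | τ ω = s}.indicator (fun ω => U s (R s ω)) ω := by
    funext ω
    have hτω := hτ.1 ω
    rw [sum_eq_single_of_mem (τ ω) (Finset.mem_Ioc.2 ⟨hτω.1, hτω.2⟩)]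
    · simp
    · exact fun s _ hne => Set.indicator_of_notMem (fun h => hne h.symm) _
  rw [hsplit, integral_finsetSum _ fun s hs => ?_]
  · rfl
  have hs' := Finset.mem_Ioc.1 hs
  exact (hR.integrable_comp ⟨hs'.1, hs'.2⟩ (U s)).indicator
    (genFilt_le hR.measurable s _ (hτ.2 s))

lemma payoffAfter_eq_add {c : ℕ} (hc : c < ν) :
    payoffAfter μ R U τ ν c
      = ∫ ω, {ω | τ ω = c + 1}.indicator (fun ω => U (c + 1) (R (c + 1) ω)) ω ∂μ
        + payoffAfter μ R U τ ν (c + 1) := by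
  rw [payoffAfter, ← insert_Ioc_add_one_left_eq_Ioc hc, sum_insert (by simp)]
  rfl

lemma IsStopTime.payoffAfter_pred_eq [IsFiniteMeasure μ] (hR : IndepUniformRanks μ ν R)
    (hτ : IsStopTime R ν τ) (hν : 1 ≤ ν) :
    payoffAfter μ R U τ ν (ν - 1)
      = μ.real {ω | ν - 1 < τ ω} * ((ν : ℝ)⁻¹ * ∑ r ∈ Icc 1 ν, U ν r) := by
  have hlast : {ω | τ ω = ν} = {ω | ν - 1 < τ ω} := by
    ext ω; have := (hτ.1 ω).2; simp only [Set.mem_ofPred_eq]; omega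
  rw [payoffAfter, show Ioc (ν - 1) ν = {ν} by ext; simp; omega, sum_singleton, hlast]
  exact hR.integral_indicator_comp (hτ.measurableSet_lt (ν - 1)) (by omega) le_rfl (U ν)

lemma IsStopTime.integrable_stop_add_continue [IsFiniteMeasure μ]
    (hR : IndepUniformRanks μ ν R) (hτ : IsStopTime R ν τ) {c : ℕ} (hc : c < ν) (x : ℝ) :
    Integrable (fun ω => {ω | τ ω = c + 1}.indicator (fun ω => U (c + 1) (R (c + 1) ω)) ω
      + {ω | c + 1 < τ ω}.indicator (fun _ => x) ω) μ :=
  ((hR.integrable_comp ⟨by omega, hc⟩ _).indicator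
    (genFilt_le hR.measurable _ _ (hτ.2 (c + 1)))).add
    ((integrable_const x).indicator (genFilt_le hR.measurable _ _ (hτ.measurableSet_lt (c + 1))))

lemma IsStopTime.integral_stop_add_continue [IsFiniteMeasure μ] (hR : IndepUniformRanks μ ν R)
    (hτ : IsStopTime R ν τ) {c : ℕ} (hc : c < ν) (x : ℝ) :
    ∫ ω, {ω | τ ω = c + 1}.indicator (fun ω => U (c + 1) (R (c + 1) ω)) ω ∂μ
        + μ.real {ω | c + 1 < τ ω} * x
      = ∫ ω, ({ω | τ ω = c + 1}.indicator (fun ω => U (c + 1) (R (c + 1) ω)) ω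
        + {ω | c + 1 < τ ω}.indicator (fun _ => x) ω) ∂μ := by
  have hcont := genFilt_le hR.measurable _ _ (hτ.measurableSet_lt (c + 1))
  rw [integral_add ((hR.integrable_comp ⟨by omega, hc⟩ _).indicator
      (genFilt_le hR.measurable _ _ (hτ.2 (c + 1))))
    ((integrable_const x).indicator hcont), integral_indicator_const _ hcont, smul_eq_mul]

lemma IsStopTime.integral_indicator_max [IsFiniteMeasure μ] (hR : IndepUniformRanks μ ν R)
    (hτ : IsStopTime R ν τ) {c : ℕ} (hc : c < ν) (x : ℝ) :
    ∫ ω, {ω | c < τ ω}.indicator (fun ω => max x (U (c + 1) (R (c + 1) ω))) ω ∂μ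
      = μ.real {ω | c < τ ω} * (((c + 1 : ℕ) : ℝ)⁻¹ * ∑ r ∈ Icc 1 (c + 1), max x (U (c + 1) r)) :=
  hR.integral_indicator_comp (hτ.measurableSet_lt c) c.lt_succ_self hc fun r => max x (U (c + 1) r)

lemma IsStopTime.stop_add_continue_le [IsFiniteMeasure μ] (hR : IndepUniformRanks μ ν R)
    (hτ : IsStopTime R ν τ) {c : ℕ} (hc : c < ν) (x : ℝ) :
    ∫ ω, {ω | τ ω = c + 1}.indicator (fun ω => U (c + 1) (R (c + 1) ω)) ω ∂μ
        + μ.real {ω | c + 1 < τ ω} * x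
      ≤ μ.real {ω | c < τ ω}
        * (((c + 1 : ℕ) : ℝ)⁻¹ * ∑ r ∈ Icc 1 (c + 1), max x (U (c + 1) r)) := by
  rw [hτ.integral_stop_add_continue hR hc, ← hτ.integral_indicator_max hR hc]
  exact integral_mono (hτ.integrable_stop_add_continue hR hc x)
    ((hR.integrable_comp ⟨by omega, hc⟩ fun r => max x (U (c + 1) r)).indicator
      (genFilt_le hR.measurable _ _ (hτ.measurableSet_lt c)))
    fun ω => indicator_stop_add_continue_le c _ _ ω

lemma IsStopTime.stop_add_continue_eq [IsFiniteMeasure μ] (hR : IndepUniformRanks μ ν R)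
    (hτ : IsStopTime R ν τ) {c : ℕ} (hc : c < ν) {x : ℝ}
    (hrule : ∀ ω, c < τ ω → (τ ω = c + 1 ↔ x < U (c + 1) (R (c + 1) ω))) :
    ∫ ω, {ω | τ ω = c + 1}.indicator (fun ω => U (c + 1) (R (c + 1) ω)) ω ∂μ
        + μ.real {ω | c + 1 < τ ω} * x
      = μ.real {ω | c < τ ω}
        * (((c + 1 : ℕ) : ℝ)⁻¹ * ∑ r ∈ Icc 1 (c + 1), max x (U (c + 1) r)) := by
  rw [hτ.integral_stop_add_continue hR hc, ← hτ.integral_indicator_max hR hc]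
  exact integral_congr_ae (ae_of_all _ fun ω => indicator_stop_add_continue_eq (hrule ω))

end OptimalStopping

lemma lt_sInf_firstHit_iff {P : ℕ → Prop} {c ν : ℕ} (hc : c < ν) :
    c < sInf ({u | u ∈ Set.Icc 1 (ν - 1) ∧ P u} ∪ {ν}) ↔ ∀ u ∈ Set.Icc 1 c, ¬P u := by
  rw [Nat.lt_iff_add_one_le, le_csInf_iff' ⟨ν, Or.inr rfl⟩]
  constructor
  · intro h u hu hP
    have := hu.2
    have := h (Or.inl ⟨⟨hu.1, by omega⟩, hP⟩)
    omega
  · rintro h u (⟨hu, hP⟩ | rfl)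
    · by_contra hlt
      exact h u ⟨hu.1, by omega⟩ hP
    · omega

section ThresholdRule

variable {Ω : Type*} {ν : ℕ} {R : ℕ → Ω → ℕ} {U : ℕ → ℕ → ℝ} {w : ℕ → ℝ} {τ : Ω → ℕ}

lemma isStopTime_of_eq_sInf (hν : 1 ≤ ν)
    (hτ : ∀ ω, τ ω = sInf ({t | t ∈ Set.Icc 1 (ν - 1) ∧ U t (R t ω) > w t} ∪ {ν})) :
    IsStopTime R ν τ := by
  have hτν : ∀ ω, τ ω ≤ ν := fun ω => hτ ω ▸ Nat.sInf_le (Or.inr rfl)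
  refine isStopTime_of_measurableSet_lt (fun ω => ⟨?_, hτν ω⟩) fun c => ?_
  · rw [hτ ω, ← Nat.lt_iff_add_one_le, lt_sInf_firstHit_iff hν]
    rintro u ⟨hu, hu'⟩
    omega
  by_cases hc : c < ν
  · have hset : {ω | c < τ ω} = ⋂ u ∈ Finset.Icc 1 c, R u ⁻¹' {r | ¬U u r > w u} := by
      ext ω
      simp only [Set.mem_ofPred_eq]
      rw [hτ ω, lt_sInf_firstHit_iff hc]
      simp
    rw [hset]
    exact Finset.measurableSet_biInter _ fun u hu =>
      measurableSet_genFilt_preimage (Finset.mem_Icc.1 hu) .of_discrete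
  · have hset : {ω | c < τ ω} = ∅ := Set.eq_empty_of_forall_notMem fun ω h => by
      have := hτν ω
      simp only [Set.mem_ofPred_eq] at h
      omega
    exact hset ▸ @MeasurableSet.empty Ω (genFilt R c)

lemma stop_iff_of_eq_sInf
    (hτ : ∀ ω, τ ω = sInf ({t | t ∈ Set.Icc 1 (ν - 1) ∧ U t (R t ω) > w t} ∪ {ν}))
    {c : ℕ} (hc : c + 1 < ν) (ω : Ω) (hcτ : c < τ ω) :
    τ ω = c + 1 ↔ w (c + 1) < U (c + 1) (R (c + 1) ω) := by
  have hprev := (lt_sInf_firstHit_iff (show c < ν by omega)).1 (hτ ω ▸ hcτ)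
  have hcont := lt_sInf_firstHit_iff (P := fun t => U t (R t ω) > w t) hc
  rw [← hτ ω] at hcont
  constructor
  · intro hstop
    by_contra hP
    have hlater : c + 1 < τ ω := hcont.2 fun u hu => by
      rcases (show u ≤ c ∨ u = c + 1 by have := hu.2; omega) with hu' | rfl
      · exact hprev u ⟨hu.1, hu'⟩
      · exact hP
    omega
  · intro hP
    have : ¬c + 1 < τ ω := fun h => hcont.1 h (c + 1) ⟨by omega, le_rfl⟩ hP
    omega

end ThresholdRule

structure IsContinuationValue (ν : ℕ) (U : ℕ → ℕ → ℝ) (w : ℕ → ℝ) : Prop where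
  last : w (ν - 1) = (ν : ℝ)⁻¹ * ∑ r ∈ Icc 1 ν, U ν r
  succ : ∀ c, c + 1 < ν →
    w c = ((c + 1 : ℕ) : ℝ)⁻¹ * ∑ r ∈ Icc 1 (c + 1), max (w (c + 1)) (U (c + 1) r)

section Value

variable {Ω : Type*} [MeasurableSpace Ω] {μ : Measure Ω} {ν : ℕ} {R : ℕ → Ω → ℕ}
  {U : ℕ → ℕ → ℝ} {w : ℕ → ℝ} {τ : Ω → ℕ}

theorem IsStopTime.payoffAfter_le [IsFiniteMeasure μ] (hR : IndepUniformRanks μ ν R)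
    (hτ : IsStopTime R ν τ) (hw : IsContinuationValue ν U w) {c : ℕ} (hc : c < ν) :
    payoffAfter μ R U τ ν c ≤ μ.real {ω | c < τ ω} * w c := by
  have hν : 1 ≤ ν := by omega
  replace hc : c ≤ ν - 1 := by omega
  induction hc using Nat.decreasingInduction with
  | self => rw [hτ.payoffAfter_pred_eq hR hν, hw.last]
  | of_succ c hcν ih =>
    have hc' : c + 1 < ν := by omega
    rw [payoffAfter_eq_add (by omega), hw.succ c hc']
    exact (add_le_add_right ih _).trans (hτ.stop_add_continue_le hR (c := c) (by omega) _)

theorem payoffAfter_eq_of_eq_sInf [IsFiniteMeasure μ] (hR : IndepUniformRanks μ ν R)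
    (hν : 1 ≤ ν)
    (hτ : ∀ ω, τ ω = sInf ({t | t ∈ Set.Icc 1 (ν - 1) ∧ U t (R t ω) > w t} ∪ {ν}))
    (hw : IsContinuationValue ν U w) {c : ℕ} (hc : c < ν) :
    payoffAfter μ R U τ ν c = μ.real {ω | c < τ ω} * w c := by
  have hstop := isStopTime_of_eq_sInf hν hτ
  replace hc : c ≤ ν - 1 := by omega
  induction hc using Nat.decreasingInduction with
  | self => rw [hstop.payoffAfter_pred_eq hR hν, hw.last]
  | of_succ c hcν ih =>
    have hc' : c + 1 < ν := by omega
    rw [payoffAfter_eq_add (by omega), hw.succ c hc', ih]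
    exact hstop.stop_add_continue_eq hR (by omega) (stop_iff_of_eq_sInf hτ hc')

lemma IsStopTime.measureReal_zero_lt_eq_one [IsProbabilityMeasure μ] (hτ : IsStopTime R ν τ) :
    μ.real {ω | 0 < τ ω} = 1 := by
  rw [Set.eq_univ_of_forall (s := {ω | 0 < τ ω}) fun ω => (hτ.1 ω).1, probReal_univ]

theorem IsStopTime.integral_le [IsProbabilityMeasure μ] (hR : IndepUniformRanks μ ν R)
    (hτ : IsStopTime R ν τ) (hν : 1 ≤ ν) (hw : IsContinuationValue ν U w) :
    ∫ ω, U (τ ω) (R (τ ω) ω) ∂μ ≤ w 0 := by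
  simpa [hτ.integral_eq_payoffAfter_zero hR, hτ.measureReal_zero_lt_eq_one] using
    hτ.payoffAfter_le hR hw hν

theorem integral_eq_of_eq_sInf [IsProbabilityMeasure μ] (hR : IndepUniformRanks μ ν R)
    (hν : 1 ≤ ν)
    (hτ : ∀ ω, τ ω = sInf ({t | t ∈ Set.Icc 1 (ν - 1) ∧ U t (R t ω) > w t} ∪ {ν}))
    (hw : IsContinuationValue ν U w) :
    ∫ ω, U (τ ω) (R (τ ω) ω) ∂μ = w 0 := by
  have hstop := isStopTime_of_eq_sInf hν hτ
  simpa [hstop.integral_eq_payoffAfter_zero hR, hstop.measureReal_zero_lt_eq_one] using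
    payoffAfter_eq_of_eq_sInf hR hν hτ hw hν

end Value

/-- optimal stopping of `Y t = U t (R t)` for independent `R t` uniform on
`{1,…,t}`: with `b 2 = (1/ν) ∑_{r=1}^{ν} U ν r` and
`b (t+1) = (1/(ν−t+1)) ∑_{r=1}^{ν−t+1} max (b t) (U (ν−t+1) r)` for `t = 2,…,ν`, the rule
`τ* = min{1 ≤ t ≤ ν : Y t > b (ν−t+1)}` (with `b 1 = −∞`, so `τ* ≤ ν`) satisfies
`E[Y_{τ*}] = sup_{τ ∈ 𝒯(ℛ)} E[Y_τ] = b (ν+1)`. -/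
theorem stmt_8 {Ω : Type*} [MeasurableSpace Ω] (μ : Measure Ω) [IsProbabilityMeasure μ]
    (ν : ℕ) (hν : 1 ≤ ν)
    (R : ℕ → Ω → ℕ) (hRmeas : ∀ t, Measurable (R t))
    (hRindep : IndepSeq R (Set.Icc 1 ν) μ)
    (hRunif : ∀ t ∈ Set.Icc 1 ν, ∀ r ∈ Set.Icc 1 t, μ {ω | R t ω = r} = ((t : ℝ≥0∞))⁻¹)
    (hRrange : ∀ t ∈ Set.Icc 1 ν, ∀ ω, R t ω ∈ Set.Icc 1 t)
    (U : ℕ → ℕ → ℝ)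
    (Y : ℕ → Ω → ℝ) (hY : ∀ t ω, Y t ω = U t (R t ω))
    (b : ℕ → ℝ)
    (hb2 : b 2 = (ν : ℝ)⁻¹ * ∑ r ∈ Finset.Icc 1 ν, U ν r)
    (hbrec : ∀ t, 2 ≤ t → t ≤ ν →
      b (t + 1) = ((ν - t + 1 : ℕ) : ℝ)⁻¹ *
        ∑ r ∈ Finset.Icc 1 (ν - t + 1), max (b t) (U (ν - t + 1) r))
    (τstar : Ω → ℕ)
    (hτstar : ∀ ω, τstar ω =
      sInf ({t | t ∈ Set.Icc 1 (ν - 1) ∧ Y t ω > b (ν - t + 1)} ∪ {ν})) :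
    (∫ ω, Y (τstar ω) ω ∂μ) = b (ν + 1) ∧
    IsGreatest {x : ℝ | ∃ τ : Ω → ℕ, IsStopTime R ν τ ∧ x = ∫ ω, Y (τ ω) ω ∂μ}
      (b (ν + 1)) := by
  obtain rfl : Y = fun t ω => U t (R t ω) := funext fun t => funext (hY t)
  have hR : IndepUniformRanks μ ν R := ⟨hRmeas, hRindep, hRunif, hRrange⟩
  have hw : IsContinuationValue ν U fun t => b (ν - t + 1) := by
    refine ⟨by rw [show ν - (ν - 1) + 1 = 2 by omega, hb2], fun c hc => ?_⟩
    rw [hbrec (ν - c) (by omega) (by omega), show ν - (ν - c) + 1 = c + 1 by omega,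
      show ν - (c + 1) + 1 = ν - c by omega]
  have hopt : ∫ ω, U (τstar ω) (R (τstar ω) ω) ∂μ = b (ν + 1) :=
    integral_eq_of_eq_sInf hR hν hτstar hw
  refine ⟨hopt, ⟨τstar, isStopTime_of_eq_sInf hν hτstar, hopt.symm⟩, ?_⟩
  rintro _ ⟨τ, hτ, rfl⟩
  exact hτ.integral_le hR hν hw
end
end

section
/- For any function q : {1,…,k} → ℝ and integers 1 ≤ r ≤ t < k, the quantities I_{t,k}(r) = ∑_{a=r}^{k−t+r} q(a) · C(a−1, r−1) C(k−a, t−r) / C(k, t) satisfy the backward recursion I_{t,k}(r) = (r/(t+1)) I_{t+1,k}(r+1) + (1 − r/(t+1)) I_{t+1,k}(r). -/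
open Finset

theorem key_nat (k t r a : ℕ) (hr : 1 ≤ r) (hrt : r ≤ t) (htk : t < k)
    (har : r ≤ a) (hak : a ≤ k - t + r) :
    (k - t) * (Nat.choose (a-1) (r-1) * Nat.choose (k-a) (t-r)) =
      r * (Nat.choose (a-1) r * Nat.choose (k-a) (t-r)) +
      (t+1-r) * (Nat.choose (a-1) (r-1) * Nat.choose (k-a) (t-r+1)) := by
  obtain ⟨s, rfl⟩ : ∃ s, r = s + 1 := ⟨r - 1, by omega⟩
  have h1 : Nat.choose (a-1) (s+1) * (s+1) = Nat.choose (a-1) s * (a-1-s) :=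
    Nat.choose_succ_right_eq (a-1) s
  have h2 : Nat.choose (k-a) (t-(s+1)+1) * (t-(s+1)+1) =
      Nat.choose (k-a) (t-(s+1)) * (k-a-(t-(s+1))) :=
    Nat.choose_succ_right_eq (k-a) (t-(s+1))
  have hd : (a-1-s) + (k-a-(t-(s+1))) = k - t := by omega
  simp only [Nat.add_sub_cancel]
  calc (k - t) * (Nat.choose (a-1) s * Nat.choose (k-a) (t-(s+1)))
      = ((a-1-s) + (k-a-(t-(s+1)))) * (Nat.choose (a-1) s * Nat.choose (k-a) (t-(s+1))) := by
        rw [hd]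
    _ = Nat.choose (k-a) (t-(s+1)) * (Nat.choose (a-1) s * (a-1-s))
        + Nat.choose (a-1) s * (Nat.choose (k-a) (t-(s+1)) * (k-a-(t-(s+1)))) := by ring
    _ = Nat.choose (k-a) (t-(s+1)) * (Nat.choose (a-1) (s+1) * (s+1))
        + Nat.choose (a-1) s * (Nat.choose (k-a) (t-(s+1)+1) * (t-(s+1)+1)) := by
        rw [h1, h2]
    _ = _ := by
        have : t + 1 - (s+1) = t - (s+1) + 1 := by omega
        rw [this]; ring

/-- backward recursion for the conditional-reward quantities
`I_{t,k}(r) = ∑_{a=r}^{k−t+r} q(a) · C(a−1,r−1) C(k−a,t−r) / C(k,t)`: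
for `1 ≤ r ≤ t < k` one has
`I_{t,k}(r) = (r/(t+1)) I_{t+1,k}(r+1) + (1 − r/(t+1)) I_{t+1,k}(r)`. -/
theorem stmt_12 (k : ℕ) (q : ℕ → ℝ)
    (I : ℕ → ℕ → ℝ)
    (hI : ∀ t r, I t r =
      ∑ a ∈ Finset.Icc r (k - t + r),
        q a * ((Nat.choose (a - 1) (r - 1) * Nat.choose (k - a) (t - r) : ℝ)
          / (Nat.choose k t : ℝ)))
    (t r : ℕ) (hr : 1 ≤ r) (hrt : r ≤ t) (htk : t < k) :
    I t r = (r / (t + 1) : ℝ) * I (t + 1) (r + 1)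
      + (1 - (r / (t + 1) : ℝ)) * I (t + 1) r := by
  rw [hI t r, hI (t+1) (r+1), hI (t+1) r]
  have hA : ∑ a ∈ Finset.Icc (r+1) (k - (t+1) + (r+1)),
        q a * ((Nat.choose (a - 1) ((r+1) - 1) * Nat.choose (k - a) ((t+1) - (r+1)) : ℝ)
          / (Nat.choose k (t+1) : ℝ))
      = ∑ a ∈ Finset.Icc r (k - t + r),
        q a * ((Nat.choose (a - 1) r * Nat.choose (k - a) (t - r) : ℝ)
          / (Nat.choose k (t+1) : ℝ)) := by
    have he : k - (t+1) + (r+1) = k - t + r := by omega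
    rw [he]
    simp only [Nat.add_sub_cancel, Nat.succ_sub_succ, Nat.sub_zero]
    apply Finset.sum_subset
    · intro x hx; simp only [Finset.mem_Icc] at *; omega
    · intro x hx hx'
      simp only [Finset.mem_Icc] at hx hx'
      have : Nat.choose (x - 1) r = 0 := Nat.choose_eq_zero_of_lt (by omega)
      rw [this]; push_cast; ring
  have hB : ∑ a ∈ Finset.Icc r (k - (t+1) + r),
        q a * ((Nat.choose (a - 1) (r - 1) * Nat.choose (k - a) ((t+1) - r) : ℝ)
          / (Nat.choose k (t+1) : ℝ))
      = ∑ a ∈ Finset.Icc r (k - t + r),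
        q a * ((Nat.choose (a - 1) (r - 1) * Nat.choose (k - a) (t - r + 1) : ℝ)
          / (Nat.choose k (t+1) : ℝ)) := by
    have he : (t+1) - r = t - r + 1 := by omega
    rw [he]
    apply Finset.sum_subset
    · intro x hx; simp only [Finset.mem_Icc] at *; omega
    · intro x hx hx'
      simp only [Finset.mem_Icc] at hx hx'
      have : Nat.choose (k - x) (t - r + 1) = 0 :=
        Nat.choose_eq_zero_of_lt (by omega)
      rw [this]; push_cast; ring
  have hs : (r+1) - 1 = r := by omega
  rw [hA, hB, Finset.mul_sum, Finset.mul_sum, ← Finset.sum_add_distrib]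
  apply Finset.sum_congr rfl
  intro a ha
  simp only [Finset.mem_Icc] at ha
  have hCt : (Nat.choose k t : ℝ) ≠ 0 := by
    exact Nat.cast_ne_zero.mpr (Nat.choose_pos (le_of_lt htk)).ne'
  have hCt1 : (Nat.choose k (t+1) : ℝ) ≠ 0 := by
    exact Nat.cast_ne_zero.mpr (Nat.choose_pos htk).ne'
  have ht1 : (t : ℝ) + 1 ≠ 0 := by positivity
  have h3 : (Nat.choose k (t+1) * (t+1) : ℝ) = Nat.choose k t * ((k:ℝ) - t) := by
    have := Nat.choose_succ_right_eq k t
    have hc : ((Nat.choose k (t+1) * (t+1) : ℕ) : ℝ) = ((Nat.choose k t * (k - t) : ℕ) : ℝ) := by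
      exact_mod_cast congrArg Nat.cast this
    push_cast [Nat.cast_sub (le_of_lt htk)] at hc
    linarith [hc]
  have hkey := key_nat k t r a hr hrt htk ha.1 ha.2
  have hkeyR : ((k:ℝ) - t) * (Nat.choose (a-1) (r-1) * Nat.choose (k-a) (t-r)) =
      r * (Nat.choose (a-1) r * Nat.choose (k-a) (t-r)) +
      ((t:ℝ)+1-r) * (Nat.choose (a-1) (r-1) * Nat.choose (k-a) (t-r+1)) := by
    have hc := congrArg (Nat.cast : ℕ → ℝ) hkey
    push_cast [Nat.cast_sub (le_of_lt htk), Nat.cast_sub (show r ≤ t+1 by omega)] at hc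
    linarith [hc]
  field_simp
  linear_combination (q a) * (Nat.choose k t : ℝ) * hkeyR + (q a) * ((Nat.choose (a-1) (r-1) : ℝ) * (Nat.choose (k-a) (t-r) : ℝ)) * h3
end

section
/- For i.i.d. continuous observations and integers 1 ≤ r ≤ t ≤ n, the conditional second moment of the absolute rank satisfies E[A_{t,n}² | R_t = r] = [(n+1)(n+2) / ((t+1)(t+2))] · r · (r + (n−t)/(n+2)). -/
/-!
Write `A_{t,n} = R_t + K`, where `K` counts the later observations `X j`, `t < j ≤ n`, with
`X t ≤ X j`. On `{R_t = r}`, `A_{t,n}² = r² + (2r+1)·C(K,1) + 2·C(K,2)`, and `C(K,d)` counts the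
`d`-sets `D` of later indices with `X t ≤ X j` for all `j ∈ D`. So it suffices that for disjoint
blocks of indices `B ∋ t` and `D`, with `#B = m` and `#D = d`,
`P(X t has rank s in B, X t ≤ X j for all j ∈ D) = s(s+1)⋯(s+d-1) / (m(m+1)⋯(m+d))`.
For `D = ∅` this is the uniformity of the rank: an i.i.d. sample is exchangeable and has no ties.
Moving one index from `D` into `B` gives a linear recursion in `s`, and induction on `D` finishes.
-/

open MeasureTheory ProbabilityTheory Finset
open scoped ENNReal Classical

noncomputable section

section RankAmong

variable {ι α : Type*} [LinearOrder α]

def rankAmong (s : Finset ι) (y : ι → α) (i : ι) : ℕ := #{j ∈ s | y i ≤ y j}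

lemma rankAmong_pos {s : Finset ι} {y : ι → α} {i : ι} (hi : i ∈ s) : 0 < rankAmong s y i :=
  card_pos.mpr ⟨i, mem_filter.mpr ⟨hi, le_rfl⟩⟩

lemma rankAmong_le_card (s : Finset ι) (y : ι → α) (i : ι) : rankAmong s y i ≤ #s :=
  card_filter_le _ _

lemma rankAmong_lt_of_lt {s : Finset ι} {y : ι → α} {i i' : ι} (hi : i ∈ s)
    (h : y i < y i') : rankAmong s y i' < rankAmong s y i := by
  refine card_lt_card ⟨monotone_filter_right _ fun j _ hj => h.le.trans hj, fun hsub => ?_⟩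
  exact (mem_filter.mp (hsub (mem_filter.mpr ⟨hi, le_rfl⟩))).2.not_gt h

lemma rankAmong_injOn {s : Finset ι} {y : ι → α} (hy : Set.InjOn y s) :
    Set.InjOn (rankAmong s y) s := by
  intro i hi i' hi' h
  rcases lt_trichotomy (y i) (y i') with hlt | heq | hlt
  · exact absurd h (rankAmong_lt_of_lt hi hlt).ne'
  · exact hy hi hi' heq
  · exact absurd h (rankAmong_lt_of_lt hi' hlt).ne

lemma image_rankAmong {s : Finset ι} {y : ι → α} (hy : Set.InjOn y s) :
    s.image (rankAmong s y) = Icc 1 #s := by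
  refine eq_of_subset_of_card_le (fun k hk => ?_) ?_
  · obtain ⟨i, hi, rfl⟩ := mem_image.mp hk
    exact mem_Icc.mpr ⟨rankAmong_pos hi, rankAmong_le_card s y i⟩
  · rw [card_image_of_injOn (rankAmong_injOn hy), Nat.card_Icc, Nat.add_sub_cancel]

lemma card_filter_rankAmong_eq {s : Finset ι} {y : ι → α} (hy : Set.InjOn y s) {r : ℕ}
    (hr1 : 1 ≤ r) (hr : r ≤ #s) : #{i ∈ s | rankAmong s y i = r} = 1 := by
  obtain ⟨i, hi, rfl⟩ : ∃ i ∈ s, rankAmong s y i = r := by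
    rw [← mem_image, image_rankAmong hy]
    exact mem_Icc.mpr ⟨hr1, hr⟩
  refine card_eq_one.mpr ⟨i, eq_singleton_iff_unique_mem.mpr ⟨mem_filter.mpr ⟨hi, rfl⟩, ?_⟩⟩
  intro i' hi'
  exact rankAmong_injOn hy (mem_filter.mp hi').1 hi (mem_filter.mp hi').2

lemma rankAmong_univ_comp_equiv [Fintype ι] (σ : ι ≃ ι) (y : ι → α) (i : ι) :
    rankAmong univ (y ∘ σ) i = rankAmong univ y (σ i) :=
  card_equiv σ (by simp)

lemma rankAmong_eq_univ_subtype (s : Finset ι) (y : ι → α) {i : ι} (hi : i ∈ s) :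
    rankAmong s y i = rankAmong univ (fun j : s => y j) ⟨i, hi⟩ := by
  unfold rankAmong
  rw [← card_map (Function.Embedding.subtype _)]
  congr 1
  ext j
  simp [and_comm]

lemma rankAmong_insert [DecidableEq ι] {s : Finset ι} {j : ι} (hj : j ∉ s) (y : ι → α)
    (i : ι) : rankAmong (insert j s) y i = rankAmong s y i + if y i ≤ y j then 1 else 0 := by
  unfold rankAmong
  rw [filter_insert]
  split_ifs
  · exact card_insert_of_notMem fun hj' => hj (mem_filter.mp hj').1
  · rfl

lemma rankAmong_union [DecidableEq ι] {s s' : Finset ι} (h : Disjoint s s') (y : ι → α)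
    (i : ι) : rankAmong (s ∪ s') y i = rankAmong s y i + rankAmong s' y i := by
  unfold rankAmong
  rw [filter_union, card_union_of_disjoint (disjoint_filter_filter h)]

lemma choose_rankAmong (s : Finset ι) (y : ι → α) (i : ι) (d : ℕ) :
    (rankAmong s y i).choose d = #{D ∈ s.powersetCard d | ∀ j ∈ D, y i ≤ y j} := by
  unfold rankAmong
  rw [← card_powersetCard]
  congr 1
  ext D
  simp only [mem_powersetCard, mem_filter, subset_iff, imp_and, forall_and]
  tauto

end RankAmong

lemma measurable_rankAmong {Ω ι : Type*} [MeasurableSpace Ω] {Y : ι → Ω → ℝ} {s : Finset ι}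
    {i : ι} (hi : Measurable (Y i)) (hs : ∀ j ∈ s, Measurable (Y j)) :
    Measurable fun ω => rankAmong s (fun j => Y j ω) i := by
  simp_rw [rankAmong, card_filter]
  exact Finset.measurable_sum s fun j hj =>
    Measurable.ite (measurableSet_le hi (hs j hj)) measurable_const measurable_const

section ProductMeasure

variable {ι : Type*} [Fintype ι] {ν : Measure ℝ}

lemma measurePreserving_comp_equiv [SigmaFinite ν] (σ : ι ≃ ι) :
    MeasurePreserving (fun y : ι → ℝ => y ∘ σ) (Measure.pi fun _ => ν)
      (Measure.pi fun _ => ν) := by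
  convert measurePreserving_piCongrLeft (fun _ : ι => ν) σ.symm using 1
  funext y k
  simpa using (MeasurableEquiv.piCongrLeft_apply_apply (β := fun _ => ℝ) σ.symm y (σ k)).symm

variable [IsProbabilityMeasure ν] [NullSingletonClass ν]

lemma measure_pi_coord_eq_coord {i j : ι} (hij : i ≠ j) :
    Measure.pi (fun _ : ι => ν) {y | y i = y j} = 0 := by
  have hind : IndepFun (fun y : ι → ℝ => y i) (fun y => y j) (Measure.pi fun _ => ν) :=
    (iIndepFun_pi (X := fun _ => id) fun _ => aemeasurable_id).indepFun hij
  rw [indepFun_iff_map_prod_eq_prod_map_map (measurable_pi_apply i).aemeasurable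
    (measurable_pi_apply j).aemeasurable, (measurePreserving_eval _ i).map_eq,
    (measurePreserving_eval _ j).map_eq] at hind
  have hdiag : MeasurableSet {p : ℝ × ℝ | p.1 = p.2} := measurableSet_diagonal
  change Measure.pi _ ((fun y : ι → ℝ => (y i, y j)) ⁻¹' {p | p.1 = p.2}) = 0
  rw [← Measure.map_apply ((measurable_pi_apply i).prodMk (measurable_pi_apply j)) hdiag, hind,
    Measure.prod_apply hdiag]
  simp

lemma ae_injective_pi : ∀ᵐ y ∂(Measure.pi fun _ : ι => ν), Function.Injective y := by
  have hne : ∀ᵐ y ∂(Measure.pi fun _ : ι => ν), ∀ i j, i ≠ j → y i ≠ y j :=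
    ae_all_iff.mpr fun i => ae_all_iff.mpr fun j =>
      Filter.eventually_imp_distrib_left.mpr fun hij =>
        measure_eq_zero_iff_ae_notMem.mp (measure_pi_coord_eq_coord hij)
  filter_upwards [hne] with y hy i j hyij
  by_contra hij
  exact hy i j hij hyij

/- Swapping two coordinates preserves the product measure, so all coordinates have the same rank
distribution; and almost surely exactly one coordinate has rank `r`. -/
lemma measure_pi_rankAmong_eq (i : ι) {r : ℕ} (hr1 : 1 ≤ r) (hr : r ≤ Fintype.card ι) :
    Measure.pi (fun _ : ι => ν) {y | rankAmong univ y i = r} = (Fintype.card ι : ℝ≥0∞)⁻¹ := by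
  set P := Measure.pi fun _ : ι => ν
  set A : ι → Set (ι → ℝ) := fun k => {y | rankAmong univ y k = r}
  have hA : ∀ k, MeasurableSet (A k) := fun k =>
    measurable_rankAmong (Y := fun (j : ι) (y : ι → ℝ) => y j) (measurable_pi_apply k)
      (fun j _ => measurable_pi_apply j) (measurableSet_singleton r)
  have hswap : ∀ k, P (A k) = P (A i) := by
    intro k
    have hpre : A k = (fun y => y ∘ Equiv.swap k i) ⁻¹' A i := by
      ext y
      simp [A, rankAmong_univ_comp_equiv]
    rw [hpre, (measurePreserving_comp_equiv _).measure_preimage (hA i).nullMeasurableSet]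
  have hcount : ∀ᵐ y ∂P, ∑ k, (A k).indicator 1 y = (1 : ℝ≥0∞) := by
    filter_upwards [ae_injective_pi] with y hy
    simp only [A, Set.indicator_apply, Set.mem_ofPred_eq, Pi.one_apply]
    rw [sum_boole, card_filter_rankAmong_eq hy.injOn hr1 (by rwa [card_univ]), Nat.cast_one]
  have hsum : ∑ k, P (A k) = 1 := by
    calc ∑ k, P (A k) = ∫⁻ y, ∑ k, (A k).indicator 1 y ∂P := by
          rw [lintegral_finsetSum _ fun k _ => measurable_one.indicator (hA k)]
          simp only [lintegral_indicator_one (hA _)]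
      _ = 1 := by rw [lintegral_congr_ae hcount, lintegral_one, measure_univ]
  rw [sum_congr rfl fun k _ => hswap k, sum_const, card_univ, nsmul_eq_mul, mul_comm] at hsum
  exact ENNReal.eq_inv_of_mul_eq_one_left hsum

end ProductMeasure

lemma ascFactorial_eq_mul_succ_ascFactorial (n k : ℕ) :
    n.ascFactorial (k + 1) = n * (n + 1).ascFactorial k := by
  rw [add_comm k 1, ← Nat.ascFactorial_mul_ascFactorial]
  simp [Nat.ascFactorial_succ]

/- With `x^(k) := x.ascFactorial k`: `s ↦ s^(d+1) / m^(d+2)` solves the recursion given by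
`measureReal_rankAmong_insert_inter_add` once the terms with `d` are known. -/
lemma succ_ascFactorial_div_ascFactorial (s m d : ℕ) (hm : 0 < m) :
    ((s + 1).ascFactorial (d + 1) : ℝ) / m.ascFactorial (d + 2)
      = s.ascFactorial (d + 1) / m.ascFactorial (d + 2)
        + (s + 1).ascFactorial d / m.ascFactorial (d + 1)
        - (s + 1).ascFactorial d / (m + 1).ascFactorial (d + 1) := by
  have hP : 0 < m.ascFactorial (d + 1) := by
    rw [ascFactorial_eq_mul_succ_ascFactorial]; positivity
  have hQ : m.ascFactorial (d + 2) = (m + (d + 1)) * m.ascFactorial (d + 1) :=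
    Nat.ascFactorial_succ
  have hQ' := ascFactorial_eq_mul_succ_ascFactorial m (d + 1)
  rw [ascFactorial_eq_mul_succ_ascFactorial s, Nat.ascFactorial_succ (n := s + 1), hQ']
  rw [hQ'] at hQ
  have hM : 0 < (m + 1).ascFactorial (d + 1) := Nat.ascFactorial_pos m _
  generalize (s + 1).ascFactorial d = a, m.ascFactorial (d + 1) = P,
    (m + 1).ascFactorial (d + 1) = M at *
  have hQr : (m : ℝ) * M = (m + (d + 1)) * P := by exact_mod_cast hQ
  push_cast
  field_simp
  linear_combination (-(a : ℝ)) * hQr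

lemma cast_add_sq_eq_choose (s k : ℕ) :
    ((s + k : ℕ) : ℝ) ^ 2
      = s ^ 2 * (k.choose 0 : ℝ) + (2 * s + 1) * (k.choose 1 : ℝ) + 2 * (k.choose 2 : ℝ) := by
  rw [Nat.cast_choose_two, Nat.choose_zero_right, Nat.choose_one_right]
  push_cast
  ring

section Events

variable {Ω ι : Type*} {X : ι → Ω → ℝ}

lemma cast_choose_rankAmong_eq_sum_indicator (F : Finset ι) (t : ι) (d : ℕ) (ω : Ω) :
    ((rankAmong F (X · ω) t).choose d : ℝ)
      = ∑ D ∈ F.powersetCard d, {ω | ∀ j ∈ D, X t ω ≤ X j ω}.indicator 1 ω := by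
  rw [choose_rankAmong, card_filter]
  push_cast
  simp [Set.indicator_apply]

variable [MeasurableSpace Ω]

lemma measurableSet_forall_le {t : ι} {D : Finset ι} (hXt : Measurable (X t))
    (hD : ∀ j ∈ D, Measurable (X j)) : MeasurableSet {ω | ∀ j ∈ D, X t ω ≤ X j ω} := by
  have h : {ω | ∀ j ∈ D, X t ω ≤ X j ω} = ⋂ j ∈ D, {ω | X t ω ≤ X j ω} := by
    ext ω
    simp
  rw [h]
  exact Finset.measurableSet_biInter D fun j hj => measurableSet_le hXt (hD j hj)

lemma integrable_cast_choose_rankAmong {μ : Measure Ω} [IsFiniteMeasure μ] {F : Finset ι}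
    {t : ι} (hXt : Measurable (X t)) (hF : ∀ j ∈ F, Measurable (X j)) (d : ℕ) :
    Integrable (fun ω => ((rankAmong F (X · ω) t).choose d : ℝ)) μ := by
  simp_rw [cast_choose_rankAmong_eq_sum_indicator]
  exact integrable_finsetSum _ fun D hD => (integrable_const 1).indicator
    (measurableSet_forall_le hXt fun j hj => hF j ((mem_powersetCard.mp hD).1 hj))

lemma measureReal_rankAmong_insert_inter_add {μ : Measure Ω} [IsFiniteMeasure μ]
    [DecidableEq ι] {B D : Finset ι} {t j : ι} (hXt : Measurable (X t)) (hXj : Measurable (X j))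
    (hjB : j ∉ B) (s : ℕ) :
    μ.real ({ω | rankAmong (insert j B) (X · ω) t = s + 1} ∩ {ω | ∀ k ∈ D, X t ω ≤ X k ω})
      + μ.real ({ω | rankAmong B (X · ω) t = s + 1} ∩ {ω | ∀ k ∈ insert j D, X t ω ≤ X k ω})
    = μ.real ({ω | rankAmong B (X · ω) t = s} ∩ {ω | ∀ k ∈ insert j D, X t ω ≤ X k ω})
      + μ.real ({ω | rankAmong B (X · ω) t = s + 1} ∩ {ω | ∀ k ∈ D, X t ω ≤ X k ω}) := by
  set E : Finset ι → ℕ → Set Ω := fun B s => {ω | rankAmong B (X · ω) t = s}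
  set C : Finset ι → Set Ω := fun D => {ω | ∀ k ∈ D, X t ω ≤ X k ω}
  set Cj : Set Ω := {ω | X t ω ≤ X j ω}
  change μ.real (E (insert j B) (s + 1) ∩ C D) + μ.real (E B (s + 1) ∩ C (insert j D))
    = μ.real (E B s ∩ C (insert j D)) + μ.real (E B (s + 1) ∩ C D)
  -- Split both left-hand events along `Cj`: their parts outside `Cj` coincide.
  have hCj : MeasurableSet Cj := measurableSet_le hXt hXj
  have hstay : E (insert j B) (s + 1) ∩ C D ∩ Cj = E B s ∩ C (insert j D) := by
    ext ω
    simp only [E, C, Cj, Set.mem_inter_iff, Set.mem_ofPred_eq, rankAmong_insert hjB,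
      forall_mem_insert]
    split_ifs with h
    · simp only [h, and_true, true_and, Nat.add_right_cancel_iff]
    · simp only [h, and_false, false_and]
  have hdrop : (E (insert j B) (s + 1) ∩ C D) \ Cj = (E B (s + 1) ∩ C D) \ Cj := by
    ext ω
    simp only [E, C, Cj, Set.mem_sdiff, Set.mem_inter_iff, Set.mem_ofPred_eq,
      rankAmong_insert hjB]
    split_ifs with h <;> simp only [h, not_true, not_false_eq_true, and_true, and_false, add_zero]
  have hkeep : E B (s + 1) ∩ C D ∩ Cj = E B (s + 1) ∩ C (insert j D) := by
    ext ω
    simp only [E, C, Cj, Set.mem_inter_iff, Set.mem_ofPred_eq, forall_mem_insert]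
    tauto
  rw [← measureReal_inter_add_sdiff (s := E (insert j B) (s + 1) ∩ C D) hCj,
    ← measureReal_inter_add_sdiff (s := E B (s + 1) ∩ C D) hCj, hstay, hdrop, hkeep]
  ring

end Events

namespace IIDContinuousOn

variable {Ω : Type*} [MeasurableSpace Ω] {μ : Measure Ω} [IsProbabilityMeasure μ]
  {X : ℕ → Ω → ℝ} {S : Set ℕ}

lemma map_eq_pi (hX : IIDContinuousOn X S μ) {B : Finset ℕ} (hB : ↑B ⊆ S) {t : ℕ}
    (ht : t ∈ S) : μ.map (fun ω (j : B) => X j ω) = Measure.pi fun _ => μ.map (X t) := by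
  have hind : iIndepFun (fun j : B => X j) μ :=
    iIndepFun.precomp (g := Set.inclusion hB) (Set.inclusion_injective hB) hX.2.1
  rw [(iIndepFun_iff_map_fun_eq_pi_map (f := fun j : B => X j)
    fun j => (hX.1 j (hB j.2)).aemeasurable).mp hind]
  congr
  funext j
  exact (hX.2.2.1 j (hB j.2) t ht).map_eq

lemma measure_rankAmong_eq (hX : IIDContinuousOn X S μ) {B : Finset ℕ} (hB : ↑B ⊆ S) {t : ℕ}
    (ht : t ∈ B) {r : ℕ} (hr1 : 1 ≤ r) (hr : r ≤ #B) :
    μ {ω | rankAmong B (X · ω) t = r} = (#B : ℝ≥0∞)⁻¹ := by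
  have hXt : Measurable (X t) := hX.1 t (hB ht)
  have : IsProbabilityMeasure (μ.map (X t)) := Measure.isProbabilityMeasure_map hXt.aemeasurable
  have : NullSingletonClass (μ.map (X t)) :=
    ⟨fun x => (Measure.map_apply hXt (measurableSet_singleton x)).trans (hX.2.2.2 t (hB ht) x)⟩
  have hY : Measurable fun ω (j : B) => X j ω :=
    measurable_pi_lambda _ fun j => hX.1 j (hB j.2)
  have hpre : {ω | rankAmong B (X · ω) t = r}
      = (fun ω (j : B) => X j ω) ⁻¹' {y | rankAmong univ y ⟨t, ht⟩ = r} := by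
    ext ω
    simp [rankAmong_eq_univ_subtype _ _ ht]
  rw [hpre, ← Measure.map_apply hY, hX.map_eq_pi hB (hB ht),
    measure_pi_rankAmong_eq _ hr1 (by rwa [Fintype.card_coe]), Fintype.card_coe]
  exact measurable_rankAmong (Y := fun (j : B) (y : B → ℝ) => y j) (measurable_pi_apply _)
    (fun j _ => measurable_pi_apply j) (measurableSet_singleton r)

lemma measureReal_rankAmong_inter_forall_le (hX : IIDContinuousOn X S μ) {B D : Finset ℕ}
    (hB : ↑B ⊆ S) (hD : ↑D ⊆ S) (hBD : Disjoint B D) {t : ℕ} (ht : t ∈ B) {s : ℕ}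
    (hs1 : 1 ≤ s) (hs : s ≤ #B) :
    μ.real ({ω | rankAmong B (X · ω) t = s} ∩ {ω | ∀ j ∈ D, X t ω ≤ X j ω})
      = s.ascFactorial #D / (#B).ascFactorial (#D + 1) := by
  induction D using Finset.induction_on generalizing B s with
  | empty =>
    simp [measureReal_def, hX.measure_rankAmong_eq hB ht hs1 hs, Nat.ascFactorial_succ]
  | insert j D hjD ih =>
    rw [coe_insert, Set.insert_subset_iff] at hD
    rw [disjoint_insert_right] at hBD
    have hB' : ↑(insert j B) ⊆ S := by rw [coe_insert]; exact Set.insert_subset hD.1 hB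
    have hBD' : Disjoint (insert j B) D := disjoint_insert_left.mpr ⟨hjD, hBD.2⟩
    have hm : 0 < #B := card_pos.mpr ⟨t, ht⟩
    rw [card_insert_of_notMem hjD]
    clear hs1
    induction s with
    | zero =>
      have hempty : {ω | rankAmong B (X · ω) t = 0} = ∅ :=
        Set.eq_empty_of_forall_notMem fun ω h => (rankAmong_pos ht).ne' h
      simp [hempty, Nat.zero_ascFactorial]
    | succ s ihs =>
      have key := measureReal_rankAmong_insert_inter_add (μ := μ) (D := D) (hX.1 t (hB ht))
        (hX.1 j hD.1) hBD.1 s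
      rw [ih (s := s + 1) hB' hD.2 hBD' (mem_insert_of_mem ht) (by omega)
          (by rw [card_insert_of_notMem hBD.1]; omega),
        ih (s := s + 1) hB hD.2 hBD.2 ht (by omega) hs, ihs (by omega),
        card_insert_of_notMem hBD.1] at key
      rw [succ_ascFactorial_div_ascFactorial s #B #D hm]
      linarith

lemma setIntegral_choose_rankAmong (hX : IIDContinuousOn X S μ) {B F : Finset ℕ}
    (hB : ↑B ⊆ S) (hF : ↑F ⊆ S) (hBF : Disjoint B F) {t : ℕ} (ht : t ∈ B) {s : ℕ}
    (hs1 : 1 ≤ s) (hs : s ≤ #B) (d : ℕ) :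
    ∫ ω in {ω | rankAmong B (X · ω) t = s}, ((rankAmong F (X · ω) t).choose d : ℝ) ∂μ
      = (#F).choose d * (s.ascFactorial d / (#B).ascFactorial (d + 1)) := by
  have hC : ∀ D ∈ F.powersetCard d, MeasurableSet {ω | ∀ j ∈ D, X t ω ≤ X j ω} :=
    fun D hD => measurableSet_forall_le (hX.1 t (hB ht))
      fun j hj => hX.1 j (hF ((mem_powersetCard.mp hD).1 hj))
  have hterm : ∀ D ∈ F.powersetCard d,
      ∫ ω in {ω | rankAmong B (X · ω) t = s},
        {ω | ∀ j ∈ D, X t ω ≤ X j ω}.indicator (1 : Ω → ℝ) ω ∂μ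
        = s.ascFactorial d / (#B).ascFactorial (d + 1) := by
    intro D hD
    obtain ⟨hDF, hDd⟩ := mem_powersetCard.mp hD
    rw [integral_indicator_one (hC D hD), measureReal_restrict_apply (hC D hD), Set.inter_comm,
      hX.measureReal_rankAmong_inter_forall_le hB ((coe_subset.mpr hDF).trans hF)
        (hBF.mono_right hDF) ht hs1 hs, hDd]
  simp_rw [cast_choose_rankAmong_eq_sum_indicator]
  rw [integral_finsetSum _ fun D hD => (integrable_const 1).indicator (hC D hD),
    sum_congr rfl hterm, sum_const, card_powersetCard, nsmul_eq_mul]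

lemma integral_cond_sq_rankAmong_add (hX : IIDContinuousOn X S μ) {B F : Finset ℕ}
    (hB : ↑B ⊆ S) (hF : ↑F ⊆ S) (hBF : Disjoint B F) {t : ℕ} (ht : t ∈ B) {s : ℕ}
    (hs1 : 1 ≤ s) (hs : s ≤ #B) :
    ∫ ω, ((rankAmong B (X · ω) t + rankAmong F (X · ω) t : ℕ) : ℝ) ^ 2
        ∂(μ[|{ω | rankAmong B (X · ω) t = s}])
      = s ^ 2 + (2 * s + 1) * #F * s / (#B + 1)
        + #F * (#F - 1) * s * (s + 1) / ((#B + 1) * (#B + 2)) := by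
  set E := {ω | rankAmong B (X · ω) t = s}
  have hXt := hX.1 t (hB ht)
  have hE : MeasurableSet E :=
    measurable_rankAmong hXt (fun j hj => hX.1 j (hB hj)) (measurableSet_singleton s)
  have hsq : ∀ ω ∈ E, ((rankAmong B (X · ω) t + rankAmong F (X · ω) t : ℕ) : ℝ) ^ 2
      = s ^ 2 * ((rankAmong F (X · ω) t).choose 0 : ℝ)
        + (2 * s + 1) * ((rankAmong F (X · ω) t).choose 1 : ℝ)
        + 2 * ((rankAmong F (X · ω) t).choose 2 : ℝ) := by
    intro ω hω
    rw [hω.out, cast_add_sq_eq_choose]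
  have hint : ∀ d (a : ℝ), Integrable (fun ω => a * ((rankAmong F (X · ω) t).choose d : ℝ))
      (μ.restrict E) := fun d a =>
    ((integrable_cast_choose_rankAmong hXt (fun j hj => hX.1 j (hF hj)) d).const_mul
      a).integrableOn
  rw [ProbabilityTheory.cond, integral_smul_measure, setIntegral_congr_fun hE hsq,
    integral_add ?_ (hint 2 _), integral_add (hint 0 _) (hint 1 _),
    integral_const_mul, integral_const_mul, integral_const_mul,
    hX.setIntegral_choose_rankAmong hB hF hBF ht hs1 hs,
    hX.setIntegral_choose_rankAmong hB hF hBF ht hs1 hs,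
    hX.setIntegral_choose_rankAmong hB hF hBF ht hs1 hs, hX.measure_rankAmong_eq hB ht hs1 hs]
  · have hm : (#B : ℝ) ≠ 0 := by exact_mod_cast (card_pos.mpr ⟨t, ht⟩).ne'
    simp only [inv_inv, ENNReal.toReal_natCast, Nat.cast_choose_two, Nat.choose_zero_right,
      Nat.choose_one_right, Nat.ascFactorial_succ, Nat.ascFactorial_zero, smul_eq_mul]
    push_cast
    field_simp
    ring
  · exact (hint 0 _).add (hint 1 _)

end IIDContinuousOn

lemma absRank_eq_rankAmong_add {Ω : Type*} (X : ℕ → Ω → ℝ) {t n : ℕ} (htn : t ≤ n) (ω : Ω) :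
    absRank X t n ω = rankAmong (Icc 1 t) (X · ω) t + rankAmong (Icc (t + 1) n) (X · ω) t := by
  have hsplit : Icc 1 n = Icc 1 t ∪ Icc (t + 1) n := by
    ext j
    simp only [mem_union, mem_Icc]
    omega
  have hdisj : Disjoint (Icc 1 t) (Icc (t + 1) n) :=
    disjoint_left.mpr fun j h1 h2 => by simp only [mem_Icc] at h1 h2; omega
  rw [show absRank X t n ω = rankAmong (Icc 1 n) (X · ω) t from rfl, hsplit,
    rankAmong_union hdisj]

lemma relRank_eq_rankAmong {Ω : Type*} (X : ℕ → Ω → ℝ) (t : ℕ) (ω : Ω) :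
    relRank X t ω = rankAmong (Icc 1 t) (X · ω) t := rfl

/-- conditional second moment of the absolute rank:
`E[A_{t,n}² | R_t = r] = [(n+1)(n+2)/((t+1)(t+2))] · r · (r + (n−t)/(n+2))`. -/
theorem stmt_14 {Ω : Type*} [MeasurableSpace Ω] (μ : Measure Ω) [IsProbabilityMeasure μ]
    (n : ℕ) (X : ℕ → Ω → ℝ) (hX : IIDContinuousOn X (Set.Icc 1 n) μ)
    (t : ℕ) (ht1 : 1 ≤ t) (htn : t ≤ n)
    (r : ℕ) (hr : r ∈ Set.Icc 1 t) :
    ∫ ω, ((absRank X t n ω : ℝ)) ^ 2 ∂(μ[|{ω | relRank X t ω = r}])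
      = (((n : ℝ) + 1) * ((n : ℝ) + 2) / (((t : ℝ) + 1) * ((t : ℝ) + 2)))
        * (r : ℝ) * ((r : ℝ) + ((n : ℝ) - (t : ℝ)) / ((n : ℝ) + 2)) := by
  have hB : ↑(Icc 1 t) ⊆ Set.Icc 1 n := by
    rw [coe_Icc]; exact Set.Icc_subset_Icc le_rfl htn
  have hF : ↑(Icc (t + 1) n) ⊆ Set.Icc 1 n := by
    rw [coe_Icc]; exact Set.Icc_subset_Icc (by omega) le_rfl
  have hBF : Disjoint (Icc 1 t) (Icc (t + 1) n) :=
    disjoint_left.mpr fun j h1 h2 => by simp only [mem_Icc] at h1 h2; omega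
  have hcard : #(Icc 1 t) = t := by simp
  simp_rw [absRank_eq_rankAmong_add X htn, relRank_eq_rankAmong]
  rw [hX.integral_cond_sq_rankAmong_add hB hF hBF (mem_Icc.mpr ⟨ht1, le_rfl⟩) hr.1
    (hcard.symm ▸ hr.2), hcard, Nat.card_Icc, Nat.add_sub_add_right, Nat.cast_sub htn]
  have ht0 : (0 : ℝ) < t := by exact_mod_cast ht1
  field_simp
  ring
end
end

section
/- For i.i.d. continuous observations and integers 1 ≤ r ≤ t ≤ n, the conditional probability that the t-th observation is the overall best satisfies P(A_{t,n} = 1 | R_t = r) = (t/n) · 1{r = 1}. -/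
open MeasureTheory ProbabilityTheory Finset
open scoped ENNReal Classical

noncomputable section

/-! Since `A_{t,n} = 1` forces `R_t = 1`, the conditional probability vanishes for `r ≠ 1` and
equals `P(A_{t,n} = 1) / P(R_t = 1)` for `r = 1`. The law of an i.i.d. vector `(X_1, …, X_k)` is
invariant under permutations of the coordinates, and ties have probability zero when the common
law is atomless. So the `k` events "the maximum of `X_1, …, X_k` is attained only at `j`" are
equally likely, pairwise disjoint and almost surely exhaustive: each has probability `1/k`. -/

section UniqueMax

variable {ι : Type*}

def uniqueMaxAt (j : ι) : Set (ι → ℝ) := {x | ∀ i ≠ j, x i < x j}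

lemma measurableSet_uniqueMaxAt [Countable ι] (j : ι) : MeasurableSet (uniqueMaxAt j) := by
  simp only [uniqueMaxAt, Set.ofPred_forall]
  exact .iInter fun i => .iInter fun _ =>
    measurableSet_lt (measurable_pi_apply i) (measurable_pi_apply j)

lemma pairwise_disjoint_uniqueMaxAt :
    Pairwise fun i j : ι => Disjoint (uniqueMaxAt i) (uniqueMaxAt j) :=
  fun i j hij => Set.disjoint_left.2 fun _ hi hj => (hi j hij.symm).asymm (hj i hij)

lemma comp_perm_mem_uniqueMaxAt_iff (σ : Equiv.Perm ι) {x : ι → ℝ} {j : ι} :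
    x ∘ σ ∈ uniqueMaxAt j ↔ x ∈ uniqueMaxAt (σ j) := by
  simp only [uniqueMaxAt, Set.mem_ofPred_eq, Function.comp_apply]
  rw [σ.forall_congr_left]
  simp [Equiv.symm_apply_eq]

lemma exists_mem_uniqueMaxAt [Fintype ι] [Nonempty ι] {x : ι → ℝ} (hx : x.Injective) :
    ∃ j, x ∈ uniqueMaxAt j := by
  obtain ⟨j, -, hj⟩ := Finset.univ.exists_max_image x Finset.univ_nonempty
  exact ⟨j, fun i hij => (hj i (Finset.mem_univ i)).lt_of_ne (hx.ne hij)⟩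

end UniqueMax

namespace ProbabilityTheory

section Exchangeable

variable {Ω ι : Type*} [MeasurableSpace Ω] {μ : Measure Ω}

lemma IndepFun.measure_eq_eq_zero [IsFiniteMeasure μ] {U V : Ω → ℝ} (hUV : IndepFun U V μ)
    (hU : Measurable U) (hV : Measurable V) (hatom : ∀ x, μ {ω | V ω = x} = 0) :
    μ {ω | U ω = V ω} = 0 := by
  have hdiag : MeasurableSet {p : ℝ × ℝ | p.1 = p.2} :=
    measurableSet_eq_fun measurable_fst measurable_snd
  have hlaw := (indepFun_iff_map_prod_eq_prod_map_map hU.aemeasurable hV.aemeasurable).1 hUV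
  change μ ((fun ω => (U ω, V ω)) ⁻¹' {p | p.1 = p.2}) = 0
  rw [← Measure.map_apply (hU.prodMk hV) hdiag, hlaw, Measure.prod_apply hdiag]
  refine (lintegral_congr fun x => ?_).trans lintegral_zero
  rw [Measure.map_apply hV (measurable_prodMk_left hdiag)]
  simpa [eq_comm, Set.preimage] using hatom x

variable [Fintype ι] {Y : ι → Ω → ℝ}

lemma iIndepFun.map_comp_perm_eq (hmeas : ∀ i, Measurable (Y i)) (hind : iIndepFun Y μ)
    (hident : ∀ i j, IdentDistrib (Y i) (Y j) μ μ) (σ : Equiv.Perm ι) :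
    μ.map (fun ω i => Y (σ i) ω) = μ.map (fun ω i => Y i ω) := by
  rw [(hind.precomp σ.injective).map_fun_eq_pi_map fun i => (hmeas _).aemeasurable,
    hind.map_fun_eq_pi_map fun i => (hmeas i).aemeasurable]
  congr 1 with i : 1
  exact (hident (σ i) i).map_eq

lemma iIndepFun.measure_uniqueMaxAt_eq (hmeas : ∀ i, Measurable (Y i))
    (hind : iIndepFun Y μ) (hident : ∀ i j, IdentDistrib (Y i) (Y j) μ μ) (j j' : ι) :
    μ ((fun ω i => Y i ω) ⁻¹' uniqueMaxAt j) = μ ((fun ω i => Y i ω) ⁻¹' uniqueMaxAt j') := by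
  have hswap : (fun ω i => Y i ω) ⁻¹' uniqueMaxAt j
      = (fun ω i => Y (Equiv.swap j' j i) ω) ⁻¹' uniqueMaxAt j' := by
    ext ω
    conv_lhs => rw [← Equiv.swap_apply_left j' j]
    exact (comp_perm_mem_uniqueMaxAt_iff _).symm
  rw [hswap, ← Measure.map_apply (measurable_pi_lambda _ fun i => hmeas _)
    (measurableSet_uniqueMaxAt j'), hind.map_comp_perm_eq hmeas hident,
    Measure.map_apply (measurable_pi_lambda _ hmeas) (measurableSet_uniqueMaxAt j')]

variable [IsProbabilityMeasure μ]

lemma iIndepFun.sum_measure_uniqueMaxAt [Nonempty ι] (hmeas : ∀ i, Measurable (Y i))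
    (hind : iIndepFun Y μ) (hatom : ∀ i x, μ {ω | Y i ω = x} = 0) :
    ∑ j, μ ((fun ω i => Y i ω) ⁻¹' uniqueMaxAt j) = 1 := by
  have hV : Measurable fun ω i => Y i ω := measurable_pi_lambda _ hmeas
  have hS : ∀ j, MeasurableSet ((fun ω i => Y i ω) ⁻¹' uniqueMaxAt j) :=
    fun j => hV (measurableSet_uniqueMaxAt j)
  have hcover : (⋃ j, (fun ω i => Y i ω) ⁻¹' uniqueMaxAt j)ᶜ
      ⊆ ⋃ (i) (j) (_ : i ≠ j), {ω | Y i ω = Y j ω} := by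
    intro ω hω
    by_contra hinj
    simp only [Set.mem_iUnion, Set.mem_ofPred_eq, not_exists] at hinj
    obtain ⟨j, hj⟩ := exists_mem_uniqueMaxAt (x := fun i => Y i ω)
      fun i j hij => not_not.1 fun hne => hinj i j hne hij
    exact hω (Set.mem_iUnion.2 ⟨j, hj⟩)
  have hties : μ (⋃ (i) (j) (_ : i ≠ j), {ω | Y i ω = Y j ω}) = 0 :=
    measure_iUnion_null fun i => measure_iUnion_null fun j => measure_iUnion_null fun hij =>
      (hind.indepFun hij).measure_eq_eq_zero (hmeas i) (hmeas j) (hatom j)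
  calc ∑ j, μ ((fun ω i => Y i ω) ⁻¹' uniqueMaxAt j)
      = μ (⋃ j, (fun ω i => Y i ω) ⁻¹' uniqueMaxAt j) := by
        rw [measure_iUnion (fun i j hij => (pairwise_disjoint_uniqueMaxAt hij).preimage _) hS,
          tsum_fintype]
    _ = 1 := (prob_compl_eq_zero_iff (.iUnion hS)).1 (measure_mono_null hcover hties)

lemma iIndepFun.measure_uniqueMaxAt (hmeas : ∀ i, Measurable (Y i)) (hind : iIndepFun Y μ)
    (hident : ∀ i j, IdentDistrib (Y i) (Y j) μ μ) (hatom : ∀ i x, μ {ω | Y i ω = x} = 0)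
    (j : ι) : μ ((fun ω i => Y i ω) ⁻¹' uniqueMaxAt j) = (Fintype.card ι : ℝ≥0∞)⁻¹ := by
  have : Nonempty ι := ⟨j⟩
  refine ENNReal.eq_inv_of_mul_eq_one_left ?_
  rw [mul_comm, ← nsmul_eq_mul, ← Finset.card_univ, ← Finset.sum_const,
    ← hind.sum_measure_uniqueMaxAt hmeas hatom]
  exact Finset.sum_congr rfl fun j' _ => hind.measure_uniqueMaxAt_eq hmeas hident j j'

end Exchangeable

end ProbabilityTheory

section Ranks

variable {Ω : Type*} {X : ℕ → Ω → ℝ}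

lemma absRank_mono {t k m : ℕ} (hkm : k ≤ m) (ω : Ω) : absRank X t k ω ≤ absRank X t m ω :=
  Finset.card_le_card (Finset.filter_subset_filter _ (Finset.Icc_subset_Icc_right hkm))

lemma one_le_absRank {t k : ℕ} (ht : t ∈ Finset.Icc 1 k) (ω : Ω) : 1 ≤ absRank X t k ω :=
  Finset.card_pos.2 ⟨t, Finset.mem_filter.2 ⟨ht, le_rfl⟩⟩

lemma relRank_eq_one_of_absRank_eq_one {t n : ℕ} (ht : 1 ≤ t) (htn : t ≤ n) {ω : Ω}
    (h : absRank X t n ω = 1) : relRank X t ω = 1 :=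
  le_antisymm (h ▸ absRank_mono htn ω) (one_le_absRank (Finset.mem_Icc.2 ⟨ht, le_rfl⟩) ω)

lemma absRank_eq_one_iff {t k : ℕ} (ht : t ∈ Set.Icc 1 k) (ω : Ω) :
    absRank X t k ω = 1 ↔ (fun i : Set.Icc 1 k => X i ω) ∈ uniqueMaxAt ⟨t, ht⟩ := by
  have hmem {i : ℕ} (hi : i ∈ Set.Icc 1 k) (hle : X t ω ≤ X i ω) :
      i ∈ (Finset.Icc 1 k).filter fun j => X t ω ≤ X j ω :=
    Finset.mem_filter.2 ⟨Finset.mem_Icc.2 hi, hle⟩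
  rw [absRank, Finset.card_eq_one]
  constructor
  · rintro ⟨a, ha⟩ ⟨i, hi⟩ hne
    by_contra hle
    have hia := hmem hi (le_of_not_gt hle)
    have hta := hmem ht le_rfl
    rw [ha, Finset.mem_singleton] at hia hta
    exact hne (Subtype.ext (hia.trans hta.symm))
  · intro h
    refine ⟨t, Finset.eq_singleton_iff_unique_mem.2 ⟨hmem ht le_rfl, fun i hi => ?_⟩⟩
    obtain ⟨hik, hle⟩ := Finset.mem_filter.1 hi
    by_contra hne
    exact (h ⟨i, Finset.mem_Icc.1 hik⟩ (fun h => hne (congrArg Subtype.val h))).not_ge hle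

lemma measurable_absRank [MeasurableSpace Ω] {t k : ℕ}
    (hX : ∀ i ∈ Set.Icc 1 k, Measurable (X i)) (ht : Measurable (X t)) :
    Measurable (absRank X t k) := by
  have : absRank X t k = fun ω => ∑ j ∈ Finset.Icc 1 k, if X t ω ≤ X j ω then 1 else 0 :=
    funext fun ω => Finset.card_filter _ _
  rw [this]
  exact Finset.measurable_sum _ fun j hj => Measurable.ite
    (measurableSet_le ht (hX j (Finset.mem_Icc.1 hj))) measurable_const measurable_const

variable [MeasurableSpace Ω] {μ : Measure Ω}

lemma IIDContinuousOn.mono {s s' : Set ℕ} (h : IIDContinuousOn X s μ) (hs : s' ⊆ s) :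
    IIDContinuousOn X s' μ :=
  ⟨fun i hi => h.1 i (hs hi), h.2.1.precomp (Set.inclusion_injective hs),
    fun i hi j hj => h.2.2.1 i (hs hi) j (hs hj), fun i hi => h.2.2.2 i (hs hi)⟩

lemma IIDContinuousOn.measure_absRank_eq_one [IsProbabilityMeasure μ] {t k : ℕ}
    (hX : IIDContinuousOn X (Set.Icc 1 k) μ) (ht : t ∈ Set.Icc 1 k) :
    μ {ω | absRank X t k ω = 1} = (k : ℝ≥0∞)⁻¹ := by
  have hset : {ω | absRank X t k ω = 1}
      = (fun ω (i : Set.Icc 1 k) => X i ω) ⁻¹' uniqueMaxAt ⟨t, ht⟩ :=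
    Set.ext fun ω => absRank_eq_one_iff ht ω
  rw [hset, iIndepFun.measure_uniqueMaxAt (Y := fun i : Set.Icc 1 k => X i)
    (fun i => hX.1 i i.2) hX.2.1 (fun i j => hX.2.2.1 i i.2 j j.2) (fun i => hX.2.2.2 i i.2),
    Fintype.card_Icc, Nat.card_Icc, Nat.add_sub_cancel]

end Ranks

theorem stmt_15_general {Ω : Type*} [MeasurableSpace Ω] (μ : Measure Ω) [IsProbabilityMeasure μ]
    (n : ℕ) (X : ℕ → Ω → ℝ) (hX : IIDContinuousOn X (Set.Icc 1 n) μ)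
    (t : ℕ) (ht1 : 1 ≤ t) (htn : t ≤ n)
    (r : ℕ) :
    μ[|{ω | relRank X t ω = r}] {ω | absRank X t n ω = 1}
      = if r = 1 then (t : ℝ≥0∞) / (n : ℝ≥0∞) else 0 := by
  have hXt : IIDContinuousOn X (Set.Icc 1 t) μ := hX.mono (Set.Icc_subset_Icc_right htn)
  have hbest : {ω | absRank X t n ω = 1} ⊆ {ω | relRank X t ω = 1} :=
    fun ω => relRank_eq_one_of_absRank_eq_one ht1 htn
  have hR : MeasurableSet {ω | relRank X t ω = r} :=
    measurable_absRank hXt.1 (hXt.1 t ⟨ht1, le_rfl⟩) (measurableSet_singleton r)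
  rw [cond_apply hR]
  split_ifs with hr
  · subst hr
    rw [Set.inter_eq_self_of_subset_right hbest]
    unfold relRank
    rw [hXt.measure_absRank_eq_one ⟨ht1, le_rfl⟩,
      hX.measure_absRank_eq_one ⟨ht1, htn⟩, inv_inv, div_eq_mul_inv]
  · have hdisj : Disjoint {ω | relRank X t ω = r} {ω | relRank X t ω = 1} :=
      Set.disjoint_left.2 fun ω h1 h2 => hr (h1.symm.trans h2)
    rw [Set.disjoint_iff_inter_eq_empty.1 (hdisj.mono_right hbest), measure_empty, mul_zero]

/-- `P(A_{t,n} = 1 | R_t = r) = (t/n) · 1{r = 1}`. -/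
theorem stmt_15 {Ω : Type*} [MeasurableSpace Ω] (μ : Measure Ω) [IsProbabilityMeasure μ]
    (n : ℕ) (X : ℕ → Ω → ℝ) (hX : IIDContinuousOn X (Set.Icc 1 n) μ)
    (t : ℕ) (ht1 : 1 ≤ t) (htn : t ≤ n)
    (r : ℕ) (hr : r ∈ Set.Icc 1 t) :
    μ[|{ω | relRank X t ω = r}] {ω | absRank X t n ω = 1}
      = if r = 1 then (t : ℝ≥0∞) / (n : ℝ≥0∞) else 0 :=
  stmt_15_general μ n X hX t ht1 htn r
end
end

section
/- For i.i.d. continuous observations and integers 1 ≤ t < k, the conditional expectation of the difference between the relative rank of the last of k observations and the absolute rank of the t-th observation satisfies E[R_k − A_{t,k} | R_1 = r_1,…,R_{t−1} = r_{t−1}, R_t = r] = (k+1)/2 − (k+1) r/(t+1), for all admissible values r_1,…,r_{t−1} and 1 ≤ r ≤ t. -/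
open MeasureTheory ProbabilityTheory Finset
open scoped ENNReal Classical

noncomputable section

/-!
Push the problem forward to `ℝ^k`, where `X 1, …, X k` have the product law `ν^k`. Since `ν` has no
atoms, almost every point of `ℝ^k` lies in exactly one of the `k!` cells `orderCell π` of points
ordered like the permutation `π`, and permuting coordinates shows that every cell has mass `1/k!`.
The conditioning event and the integrand are constant on cells, so the conditional expectation is
the average of `R_k - A_{t,k}` over the permutations with the prescribed first `t` relative ranks.
Such a permutation of `Fin (k + 1)` is one of `Fin k` with a new last value inserted, and summing
over the inserted value gives, by induction on `k`, the averages `(k + 1) / 2` of `R_k` and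
`(k + 1) r / (t + 1)` of `A_{t,k}`.
-/

open Equiv

section FinRank

variable {α β : Type*} [LinearOrder α] [LinearOrder β] {n : ℕ}

/-- The absolute rank of `x i` among `x 0, …, x (m - 1)`: the `0`-indexed `absRank`. -/
def finAbsRank (x : Fin n → α) (i : Fin n) (m : ℕ) : ℕ :=
  #{j : Fin n | (j : ℕ) < m ∧ x i ≤ x j}

def HasRelRanks (t : ℕ) (c : ℕ → ℕ) (x : Fin n → α) : Prop :=
  ∀ i : Fin n, (i : ℕ) < t → finAbsRank x i (i + 1) = c (i + 1)

lemma finAbsRank_congr {x : Fin n → α} {y : Fin n → β} (h : ∀ i j, x i ≤ x j ↔ y i ≤ y j)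
    (i : Fin n) (m : ℕ) : finAbsRank x i m = finAbsRank y i m := by
  simp only [finAbsRank, h]

lemma hasRelRanks_congr {x : Fin n → α} {y : Fin n → β} (h : ∀ i j, x i ≤ x j ↔ y i ≤ y j)
    (t : ℕ) (c : ℕ → ℕ) : HasRelRanks t c x ↔ HasRelRanks t c y := by
  simp only [HasRelRanks, finAbsRank_congr h]

def lastRankSubAbsRank (x : Fin (n + 1) → α) (i : Fin (n + 1)) : ℝ :=
  finAbsRank x (Fin.last n) (n + 1) - finAbsRank x i (n + 1)

lemma lastRankSubAbsRank_congr {x : Fin (n + 1) → α} {y : Fin (n + 1) → β}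
    (h : ∀ i j, x i ≤ x j ↔ y i ≤ y j) (i : Fin (n + 1)) :
    lastRankSubAbsRank x i = lastRankSubAbsRank y i := by
  simp only [lastRankSubAbsRank, finAbsRank_congr h]

lemma finAbsRank_castSucc (y : Fin (n + 1) → α) (i : Fin n) (m : ℕ) :
    finAbsRank y i.castSucc m = finAbsRank (y ∘ Fin.castSucc) i m +
      if n < m ∧ y i.castSucc ≤ y (Fin.last n) then 1 else 0 := by
  simp only [finAbsRank, card_filter, Fin.sum_univ_castSucc, Fin.val_castSucc, Fin.val_last,
    Function.comp_apply]

lemma finAbsRank_perm_of_le (σ : Perm (Fin n)) (i : Fin n) {m : ℕ} (hm : n ≤ m) :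
    finAbsRank σ i m = n - σ i := by
  rw [← Fin.card_Ici, finAbsRank]
  exact card_equiv σ fun j => by simp; omega

def permSnoc (π : Perm (Fin n)) (v : Fin (n + 1)) : Perm (Fin (n + 1)) :=
  finSuccEquivLast.trans (π.optionCongr.trans (finSuccEquiv' v).symm)

@[simp] lemma permSnoc_last (π : Perm (Fin n)) (v : Fin (n + 1)) :
    permSnoc π v (Fin.last n) = v := by
  simp [permSnoc]

@[simp] lemma permSnoc_castSucc (π : Perm (Fin n)) (v : Fin (n + 1)) (j : Fin n) :
    permSnoc π v j.castSucc = v.succAbove (π j) := by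
  simp [permSnoc]

lemma permSnoc_bijective :
    Function.Bijective fun p : Perm (Fin n) × Fin (n + 1) => permSnoc p.1 p.2 := by
  refine (Fintype.bijective_iff_injective_and_card _).2 ⟨?_, by
    simp [Fintype.card_perm, Nat.factorial_succ, mul_comm]⟩
  rintro ⟨π, v⟩ ⟨π', v'⟩ h
  obtain rfl : v = v' := by simpa using congr($h (Fin.last n))
  congr
  ext j : 1
  simpa using congr($h j.castSucc)

lemma finAbsRank_permSnoc_castSucc_of_le (π : Perm (Fin n)) (v : Fin (n + 1)) (i : Fin n)
    {m : ℕ} (hm : m ≤ n) : finAbsRank (permSnoc π v) i.castSucc m = finAbsRank π i m := by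
  rw [finAbsRank_castSucc, if_neg (by omega), add_zero]
  exact finAbsRank_congr (fun a b => by simp) i m

lemma finAbsRank_permSnoc_last (π : Perm (Fin n)) (v : Fin (n + 1)) :
    finAbsRank (permSnoc π v) (Fin.last n) (n + 1) = n + 1 - v := by
  rw [finAbsRank_perm_of_le _ _ le_rfl, permSnoc_last]

lemma sum_finAbsRank_permSnoc_castSucc (π : Perm (Fin n)) (i : Fin n) :
    ∑ v, finAbsRank (permSnoc π v) i.castSucc (n + 1) = (n + 2) * finAbsRank π i n := by
  have hv (v : Fin (n + 1)) : finAbsRank (permSnoc π v) i.castSucc (n + 1) =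
      finAbsRank π i n + if (π i).castSucc < v then 1 else 0 := by
    rw [finAbsRank_castSucc, finAbsRank_congr (y := π) (fun a b => by simp),
      finAbsRank_perm_of_le _ _ (by omega), finAbsRank_perm_of_le _ _ le_rfl]
    simp [← Fin.succAbove_lt_iff_castSucc_lt, le_iff_lt_or_eq, Fin.succAbove_ne]
  have hIoi : ∑ v : Fin (n + 1), (if (π i).castSucc < v then 1 else 0) = finAbsRank π i n := by
    rw [← card_filter, finAbsRank_perm_of_le _ _ le_rfl]
    simp [filter_lt_eq_Ioi, Fin.card_Ioi]
  simp only [hv, sum_add_distrib, hIoi, sum_const, card_univ, Fintype.card_fin, smul_eq_mul]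
  ring

lemma hasRelRanks_permSnoc_iff {t : ℕ} {c : ℕ → ℕ} (π : Perm (Fin n)) (v : Fin (n + 1)) :
    HasRelRanks t c (permSnoc π v) ↔ HasRelRanks t c π ∧ (n < t → n + 1 - v = c (n + 1)) := by
  simp only [HasRelRanks, Fin.forall_fin_succ', Fin.val_castSucc, Fin.val_last,
    finAbsRank_permSnoc_last]
  refine and_congr (forall_congr' fun i => imp_congr_right fun _ => ?_) Iff.rfl
  rw [finAbsRank_permSnoc_castSucc_of_le _ _ _ i.isLt]

end FinRank

section PermCount

variable {t : ℕ} {c : ℕ → ℕ}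

def permsWithRelRanks (n t : ℕ) (c : ℕ → ℕ) : Finset (Perm (Fin n)) :=
  {π | HasRelRanks t c π}

lemma sum_permsWithRelRanks_succ {M : Type*} [AddCommMonoid M] {n : ℕ} (ht : t ≤ n)
    (f : Perm (Fin (n + 1)) → M) :
    ∑ ρ ∈ permsWithRelRanks (n + 1) t c, f ρ =
      ∑ π ∈ permsWithRelRanks n t c, ∑ v, f (permSnoc π v) := by
  have hcond (π : Perm (Fin n)) (v : Fin (n + 1)) :
      HasRelRanks t c (permSnoc π v) ↔ HasRelRanks t c π := by
    simp [hasRelRanks_permSnoc_iff, show ¬ n < t by omega]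
  simp only [permsWithRelRanks, sum_filter]
  rw [← Fintype.sum_bijective _ permSnoc_bijective _ _ fun p => rfl, Fintype.sum_prod_type]
  refine sum_congr rfl fun π _ => ?_
  simp only [hcond]
  split_ifs <;> simp

lemma card_permsWithRelRanks_succ {n : ℕ} (ht : t ≤ n) :
    #(permsWithRelRanks (n + 1) t c) = (n + 1) * #(permsWithRelRanks n t c) := by
  rw [card_eq_sum_ones, sum_permsWithRelRanks_succ ht, card_eq_sum_ones, mul_sum]
  simp

lemma permsWithRelRanks_nonempty (hc : ∀ i < t, c (i + 1) ∈ Set.Icc 1 (i + 1)) (n : ℕ) :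
    (permsWithRelRanks n t c).Nonempty := by
  simp only [permsWithRelRanks, filter_nonempty_iff, mem_univ, true_and]
  induction n with
  | zero => exact ⟨1, fun i => i.elim0⟩
  | succ n ih =>
    obtain ⟨π, hπ⟩ := ih
    by_cases hn : n < t
    · obtain ⟨hc1, hc2⟩ := hc n hn
      refine ⟨permSnoc π ⟨n + 1 - c (n + 1), by omega⟩, ?_⟩
      exact (hasRelRanks_permSnoc_iff π _).2 ⟨hπ, fun _ => by simp; omega⟩
    · exact ⟨permSnoc π 0, (hasRelRanks_permSnoc_iff π _).2 ⟨hπ, fun h => absurd h hn⟩⟩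

lemma two_mul_sum_finAbsRank_last {n : ℕ} (ht : t ≤ n) :
    2 * ∑ ρ ∈ permsWithRelRanks (n + 1) t c, finAbsRank ρ (Fin.last n) (n + 1) =
      (n + 2) * #(permsWithRelRanks (n + 1) t c) := by
  have gauss (n : ℕ) : 2 * ∑ v : Fin (n + 1), (n + 1 - (v : ℕ)) = (n + 1) * (n + 2) := by
    induction n with
    | zero => simp
    | succ n ih =>
      rw [Fin.sum_univ_succ]
      simp only [Fin.val_zero, Nat.sub_zero, Fin.val_succ, Nat.add_sub_add_right, mul_add, ih]
      ring
  simp only [sum_permsWithRelRanks_succ ht, finAbsRank_permSnoc_last, sum_const, smul_eq_mul,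
    card_permsWithRelRanks_succ ht]
  rw [mul_left_comm, gauss n]
  ring

lemma mul_sum_finAbsRank_of_lt {s : ℕ} : ∀ n (hs : s < n),
    (s + 2) * ∑ π ∈ permsWithRelRanks n (s + 1) c, finAbsRank π ⟨s, hs⟩ n =
      (n + 1) * c (s + 1) * #(permsWithRelRanks n (s + 1) c) := by
  refine Nat.le_induction ?_ fun n hn ih => ?_
  · have h (π) (hπ : π ∈ permsWithRelRanks (s + 1) (s + 1) c) :
        finAbsRank π ⟨s, Nat.lt_succ_self s⟩ (s + 1) = c (s + 1) := by
      simp only [permsWithRelRanks, mem_filter] at hπ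
      exact hπ.2 _ (Nat.lt_succ_self s)
    rw [sum_congr rfl h, sum_const, smul_eq_mul, Nat.succ_eq_add_one]
    ring
  · rw [show (⟨s, by omega⟩ : Fin (n + 1)) = (⟨s, hn⟩ : Fin n).castSucc from rfl,
      sum_permsWithRelRanks_succ hn, card_permsWithRelRanks_succ hn]
    simp only [sum_finAbsRank_permSnoc_castSucc, ← mul_sum]
    rw [mul_left_comm, ih]
    ring

lemma average_lastRankSubAbsRank {s n : ℕ} {c : ℕ → ℕ} (hsn : s < n)
    (hc : ∀ i < s + 1, c (i + 1) ∈ Set.Icc 1 (i + 1)) :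
    (∑ ρ ∈ permsWithRelRanks (n + 1) (s + 1) c, lastRankSubAbsRank ρ ⟨s, by omega⟩) /
      #(permsWithRelRanks (n + 1) (s + 1) c) =
      ((n : ℝ) + 2) / 2 - ((n : ℝ) + 2) * c (s + 1) / ((s : ℝ) + 2) := by
  have hN : (#(permsWithRelRanks (n + 1) (s + 1) c) : ℝ) ≠ 0 :=
    Nat.cast_ne_zero.2 (permsWithRelRanks_nonempty hc _).card_pos.ne'
  have hlast : (2 : ℝ) * ∑ ρ ∈ permsWithRelRanks (n + 1) (s + 1) c,
      (finAbsRank ρ (Fin.last n) (n + 1) : ℝ) =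
        (n + 2) * #(permsWithRelRanks (n + 1) (s + 1) c) := by
    exact_mod_cast two_mul_sum_finAbsRank_last (c := c) hsn
  have hmid : ((s : ℝ) + 2) * ∑ ρ ∈ permsWithRelRanks (n + 1) (s + 1) c,
      (finAbsRank ρ ⟨s, by omega⟩ (n + 1) : ℝ) =
        (n + 2) * c (s + 1) * #(permsWithRelRanks (n + 1) (s + 1) c) := by
    exact_mod_cast mul_sum_finAbsRank_of_lt (c := c) (n + 1) (by omega)
  simp only [lastRankSubAbsRank, sum_sub_distrib, sub_div]
  field_simp
  linear_combination (s + 2 : ℝ) * hlast - 2 * hmid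

end PermCount

section OrderCell

variable {α : Type*} [LinearOrder α] {k : ℕ}

def orderCell (π : Perm (Fin k)) : Set (Fin k → α) := {x | ∀ i j, π i < π j → x i < x j}

lemma le_iff_of_mem_orderCell {π : Perm (Fin k)} {x : Fin k → α} (hx : x ∈ orderCell π)
    (i j : Fin k) : x i ≤ x j ↔ π i ≤ π j := by
  refine ⟨fun h => not_lt.1 fun hji => (hx j i hji).not_ge h, fun h => ?_⟩
  rcases h.lt_or_eq with h | h
  · exact (hx i j h).le
  · rw [π.injective h]

lemma pairwise_disjoint_orderCell :
    Pairwise (Function.onFun Disjoint (orderCell : Perm (Fin k) → Set (Fin k → α))) := by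
  refine fun π π' hne => Set.disjoint_left.2 fun x hx hx' => hne ?_
  have hlt (i j) : π i < π j ↔ π' i < π' j := by
    simp only [← not_le, ← le_iff_of_mem_orderCell hx, le_iff_of_mem_orderCell hx']
  have hmono : StrictMono (π' ∘ π.symm) := fun a b hab => (hlt _ _).1 (by simpa using hab)
  ext a : 1
  simpa using (congr_fun hmono.eq_id (π a)).symm

lemma mem_orderCell_of_injective {x : Fin k → α} (hx : Function.Injective x) :
    x ∈ orderCell (Tuple.sort x).symm := by
  have hmono := (Tuple.monotone_sort x).strictMono_of_injective (hx.comp (Tuple.sort x).injective)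
  intro i j hij
  simpa using hmono hij

lemma orderCell_eq_preimage (π : Perm (Fin k)) :
    (orderCell π : Set (Fin k → α)) = (fun x => x ∘ π.symm) ⁻¹' orderCell 1 := by
  ext x
  simp only [orderCell, Set.mem_ofPred_eq, Set.mem_preimage, Perm.coe_one, id_eq,
    Function.comp_apply]
  exact ⟨fun h i j hij => h _ _ (by simpa using hij), fun h i j hij => by simpa using h _ _ hij⟩

end OrderCell

section ProductMeasure

variable {k : ℕ} (ν : Measure ℝ) [IsProbabilityMeasure ν]

lemma measurableSet_orderCell (π : Perm (Fin k)) :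
    MeasurableSet (orderCell π : Set (Fin k → ℝ)) := by
  simp only [orderCell, Set.ofPred_forall]
  exact .iInter fun i => .iInter fun j => .iInter fun _ =>
    measurableSet_lt (measurable_pi_apply i) (measurable_pi_apply j)

lemma measurable_finAbsRank (i : Fin k) (m : ℕ) :
    Measurable fun x : Fin k → ℝ => finAbsRank x i m := by
  simp only [finAbsRank, card_filter]
  refine Finset.measurable_sum _ fun j _ => Measurable.ite ?_ measurable_const measurable_const
  exact (MeasurableSet.const _).inter
    (measurableSet_le (measurable_pi_apply i) (measurable_pi_apply j))

lemma measurableSet_hasRelRanks (t : ℕ) (c : ℕ → ℕ) :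
    MeasurableSet {x : Fin k → ℝ | HasRelRanks t c x} := by
  simp only [HasRelRanks, Set.ofPred_forall]
  exact .iInter fun i => .iInter fun _ => measurable_finAbsRank i _ (measurableSet_singleton _)

lemma measurable_lastRankSubAbsRank (i : Fin (k + 1)) :
    Measurable fun x : Fin (k + 1) → ℝ => lastRankSubAbsRank x i :=
  (measurable_from_nat.comp (measurable_finAbsRank _ _)).sub
    (measurable_from_nat.comp (measurable_finAbsRank _ _))

lemma measurePreserving_comp_perm (σ : Perm (Fin k)) :
    MeasurePreserving (fun x : Fin k → ℝ => x ∘ σ) (Measure.pi fun _ => ν)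
      (Measure.pi fun _ => ν) := by
  convert measurePreserving_piCongrLeft (fun _ : Fin k => ν) σ.symm
  funext i
  simp [MeasurableEquiv.coe_piCongrLeft, Equiv.piCongrLeft_apply_eq_cast]

lemma measure_setOf_apply_eq_apply [NullSingletonClass ν] {a b : Fin k} (hab : a ≠ b) :
    Measure.pi (fun _ => ν) {x | x a = x b} = 0 := by
  have hind : IndepFun (fun x : Fin k → ℝ => x a) (fun x => x b) (Measure.pi fun _ => ν) :=
    (iIndepFun_pi (X := fun _ => id) fun _ => aemeasurable_id).indepFun hab
  have hmap := (indepFun_iff_map_prod_eq_prod_map_map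
    (measurable_pi_apply a).aemeasurable (measurable_pi_apply b).aemeasurable).1 hind
  rw [(measurePreserving_eval _ a).map_eq, (measurePreserving_eval _ b).map_eq] at hmap
  have hdiag : MeasurableSet {p : ℝ × ℝ | p.1 = p.2} := measurableSet_diagonal
  rw [show {x : Fin k → ℝ | x a = x b} = (fun x => (x a, x b)) ⁻¹' {p | p.1 = p.2} from rfl,
    ← Measure.map_apply (by fun_prop) hdiag, hmap, Measure.prod_apply hdiag]
  simp

lemma measure_not_injective [NullSingletonClass ν] :
    Measure.pi (fun _ : Fin k => ν) {x | ¬ Function.Injective x} = 0 := by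
  refine measure_mono_null (fun x hx => ?_) (measure_iUnion_null fun a => measure_iUnion_null
    fun b => measure_iUnion_null fun hab => measure_setOf_apply_eq_apply ν (a := a) (b := b) hab)
  simp only [Function.Injective, not_forall] at hx
  obtain ⟨a, b, h, hab⟩ := hx
  exact Set.mem_iUnion₂.2 ⟨a, b, Set.mem_iUnion.2 ⟨hab, h⟩⟩

lemma measure_orderCell [NullSingletonClass ν] (π : Perm (Fin k)) :
    Measure.pi (fun _ => ν) (orderCell π) = (k.factorial : ℝ≥0∞)⁻¹ := by
  have hcell (π : Perm (Fin k)) :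
      Measure.pi (fun _ => ν) (orderCell π) =
        Measure.pi (fun _ => ν) (orderCell (1 : Perm (Fin k))) := by
    rw [orderCell_eq_preimage]
    exact (measurePreserving_comp_perm ν π.symm).measure_preimage
      (measurableSet_orderCell 1).nullMeasurableSet
  have hcover : Measure.pi (fun _ => ν) (⋃ π : Perm (Fin k), orderCell π) = 1 := by
    have hsub : (⋃ π : Perm (Fin k), orderCell π)ᶜ ⊆ {x : Fin k → ℝ | ¬ Function.Injective x} :=
      fun x hx hinj => hx (Set.mem_iUnion.2 ⟨_, mem_orderCell_of_injective hinj⟩)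
    exact (prob_compl_eq_zero_iff (.iUnion measurableSet_orderCell)).1
      (measure_mono_null hsub (measure_not_injective ν))
  rw [measure_iUnion pairwise_disjoint_orderCell measurableSet_orderCell, tsum_fintype,
    sum_congr rfl fun π _ => hcell π, sum_const, card_univ, Fintype.card_perm,
    Fintype.card_fin, nsmul_eq_mul] at hcover
  rw [hcell]
  exact ENNReal.eq_inv_of_mul_eq_one_left (by rwa [mul_comm])

lemma integral_cond_pi_eq_sum_div [NullSingletonClass ν] {A : Set (Fin k → ℝ)}
    (S : Finset (Perm (Fin k))) (hAS : ∀ π, ∀ x ∈ orderCell π, x ∈ A ↔ π ∈ S)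
    {g : (Fin k → ℝ) → ℝ} {G : Perm (Fin k) → ℝ} (hg : ∀ π, ∀ x ∈ orderCell π, g x = G π) :
    ∫ x, g x ∂(Measure.pi fun _ => ν)[|A] = (∑ π ∈ S, G π) / #S := by
  set P := Measure.pi fun _ : Fin k => ν
  have hAU : A =ᵐ[P] ⋃ π ∈ S, orderCell π := by
    refine ae_eq_set.2 ⟨measure_mono_null ?_ (measure_not_injective ν), ?_⟩
    · rintro x ⟨hxA, hxU⟩ hinj
      have hx := mem_orderCell_of_injective hinj
      exact hxU (Set.mem_iUnion₂.2 ⟨_, (hAS _ x hx).1 hxA, hx⟩)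
    · rw [Set.sdiff_eq_empty.2 fun x hx => ?_, measure_empty]
      obtain ⟨π, hπ, hx⟩ := Set.mem_iUnion₂.1 hx
      exact (hAS π x hx).2 hπ
  have hdisj : (S : Set (Perm (Fin k))).PairwiseDisjoint (orderCell (α := ℝ)) :=
    pairwise_disjoint_orderCell.set_pairwise _
  have hPA : P A = #S * (k.factorial : ℝ≥0∞)⁻¹ := by
    rw [measure_congr hAU, measure_biUnion_finset hdisj fun π _ => measurableSet_orderCell π]
    simp [P, measure_orderCell]
  have hint : ∫ x in A, g x ∂P = (∑ π ∈ S, G π) * (k.factorial : ℝ)⁻¹ := by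
    rw [setIntegral_congr_set hAU, integral_biUnion_finset S
      (fun π _ => measurableSet_orderCell π) hdisj ?_, sum_mul]
    · refine sum_congr rfl fun π _ => ?_
      rw [setIntegral_congr_fun (measurableSet_orderCell π) (hg π), setIntegral_const,
        measureReal_def, measure_orderCell]
      simp [mul_comm]
    · intro π _
      exact (integrableOn_const (measure_ne_top _ _)).congr_fun
        (fun x hx => (hg π x hx).symm) (measurableSet_orderCell π)
  rw [ProbabilityTheory.cond, integral_smul_measure, hint, hPA, ENNReal.toReal_inv,
    ENNReal.toReal_mul, ENNReal.toReal_inv]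
  have hk : (k.factorial : ℝ) ≠ 0 := Nat.cast_ne_zero.2 k.factorial_ne_zero
  simp only [ENNReal.toReal_natCast, smul_eq_mul]
  field_simp

end ProductMeasure

lemma map_cond_preimage {Ω E : Type*} [MeasurableSpace Ω] [MeasurableSpace E] {μ : Measure Ω}
    {Y : Ω → E} (hY : Measurable Y) {A : Set E} (hA : MeasurableSet A) :
    (μ[|Y ⁻¹' A]).map Y = (μ.map Y)[|A] := by
  simp only [ProbabilityTheory.cond, Measure.map_smul, ← Measure.restrict_map hY hA,
    Measure.map_apply hY hA]

lemma map_shift_eq_pi {Ω : Type*} [MeasurableSpace Ω] {μ : Measure Ω} [IsProbabilityMeasure μ]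
    {X : ℕ → Ω → ℝ} (hmeas : ∀ i ∈ Set.Ici 1, Measurable (X i))
    (hindep : IndepSeq X (Set.Ici 1) μ)
    (hident : ∀ i ∈ Set.Ici 1, ∀ j ∈ Set.Ici 1, IdentDistrib (X i) (X j) μ μ) (k : ℕ) :
    μ.map (fun ω (j : Fin k) => X (j + 1) ω) = Measure.pi fun _ => μ.map (X 1) := by
  have hind : iIndepFun (fun j : Fin k => X (j + 1)) μ :=
    iIndepFun.precomp (g := fun j : Fin k => (⟨j + 1, Nat.le_add_left 1 j⟩ : Set.Ici 1))
      (fun a b h => Fin.ext (by simpa using congrArg Subtype.val h)) hindep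
  rw [(iIndepFun_iff_map_fun_eq_pi_map fun j => (hmeas _ (by simp)).aemeasurable).1 hind]
  congr with j : 1
  exact (hident _ (by simp) 1 (by simp)).map_eq

lemma absRank_eq_finAbsRank {Ω : Type*} (X : ℕ → Ω → ℝ) (ω : Ω) {k m : ℕ} (i : Fin k)
    (hm : m ≤ k) : absRank X (i + 1) m ω = finAbsRank (fun j : Fin k => X (j + 1) ω) i m := by
  symm
  refine card_nbij (fun j : Fin k => (j : ℕ) + 1) (fun j hj => ?_) (fun a _ b _ h => ?_)
    fun j hj => ?_
  · simp only [mem_coe, mem_filter, mem_univ, true_and, mem_Icc] at hj ⊢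
    exact ⟨by omega, hj.2⟩
  · simpa [Fin.ext_iff] using h
  · simp only [mem_coe, mem_filter, mem_Icc] at hj
    refine ⟨⟨j - 1, by omega⟩, ?_, by simp; omega⟩
    simp only [mem_coe, mem_filter, mem_univ, true_and]
    exact ⟨by omega, by rw [Nat.sub_add_cancel hj.1.1]; exact hj.2⟩

lemma hasRelRanks_iff {Ω : Type*} (X : ℕ → Ω → ℝ) (ω : Ω) {k t : ℕ} (htk : t ≤ k)
    (c : ℕ → ℕ) : HasRelRanks t c (fun j : Fin k => X (j + 1) ω) ↔
      ∀ i ∈ Set.Icc 1 t, relRank X i ω = c i := by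
  refine ⟨fun h i ⟨hi1, hit⟩ => ?_, fun h i hi => ?_⟩
  · obtain ⟨i, rfl⟩ : ∃ i', i = i' + 1 := ⟨i - 1, by omega⟩
    have hik : i < k := by omega
    rw [relRank, absRank_eq_finAbsRank X ω ⟨i, hik⟩ hik]
    exact h _ (by simp; omega)
  · rw [← absRank_eq_finAbsRank X ω i (by omega)]
    exact h _ ⟨by omega, by omega⟩

lemma relRank_sub_absRank_eq {Ω : Type*} (X : ℕ → Ω → ℝ) (ω : Ω) {n : ℕ} (i : Fin (n + 1)) :
    (relRank X (n + 1) ω : ℝ) - absRank X (i + 1) (n + 1) ω =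
      lastRankSubAbsRank (fun j : Fin (n + 1) => X (j + 1) ω) i := by
  have hlast := absRank_eq_finAbsRank X ω (Fin.last n) le_rfl
  rw [Fin.val_last] at hlast
  rw [relRank, hlast, absRank_eq_finAbsRank X ω i le_rfl, lastRankSubAbsRank]

lemma relRank_event_eq_preimage {Ω : Type*} (X : ℕ → Ω → ℝ) {s k : ℕ} (hsk : s + 1 ≤ k)
    (r : ℕ) (rs : ℕ → ℕ) :
    {ω | (∀ i ∈ Set.Icc 1 s, relRank X i ω = rs i) ∧ relRank X (s + 1) ω = r} =
      (fun ω (j : Fin k) => X (j + 1) ω) ⁻¹'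
        {x | HasRelRanks (s + 1) (Function.update rs (s + 1) r) x} := by
  ext ω
  simp only [Set.mem_ofPred_eq, Set.mem_preimage, hasRelRanks_iff X ω hsk]
  constructor
  · rintro ⟨h, ht⟩ i ⟨hi1, hi2⟩
    rcases hi2.eq_or_lt with rfl | hi2
    · simpa using ht
    · simpa [hi2.ne] using h i ⟨hi1, by omega⟩
  · intro h
    refine ⟨fun i ⟨hi1, hi2⟩ => ?_, by simpa using h (s + 1) ⟨by omega, le_rfl⟩⟩
    simpa [show i ≠ s + 1 by omega] using h i ⟨hi1, by omega⟩

lemma update_mem_Icc {s r : ℕ} {rs : ℕ → ℕ} (hr : r ∈ Set.Icc 1 (s + 1))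
    (hrs : ∀ i ∈ Set.Icc 1 s, rs i ∈ Set.Icc 1 i) :
    ∀ i < s + 1, Function.update rs (s + 1) r (i + 1) ∈ Set.Icc 1 (i + 1) := by
  intro i hi
  rcases (Nat.lt_succ_iff.1 hi).eq_or_lt with rfl | hi
  · simpa using hr
  · simpa [hi.ne] using hrs (i + 1) ⟨by omega, by omega⟩

/-- `E[R_k − A_{t,k} | R_1 = r_1,…,R_{t−1} = r_{t−1}, R_t = r]
  = (k+1)/2 − (k+1) r/(t+1)` for `1 ≤ t < k`. -/
theorem stmt_16 {Ω : Type*} [MeasurableSpace Ω] (μ : Measure Ω) [IsProbabilityMeasure μ]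
    (X : ℕ → Ω → ℝ) (hX : IIDContinuousOn X (Set.Ici 1) μ)
    (t k : ℕ) (ht1 : 1 ≤ t) (htk : t < k)
    (r : ℕ) (hr : r ∈ Set.Icc 1 t)
    (rs : ℕ → ℕ) (hrs : ∀ i ∈ Set.Icc 1 (t - 1), rs i ∈ Set.Icc 1 i) :
    ∫ ω, ((relRank X k ω : ℝ) - (absRank X t k ω : ℝ))
        ∂(μ[|{ω | (∀ i ∈ Set.Icc 1 (t - 1), relRank X i ω = rs i) ∧ relRank X t ω = r}])
      = ((k : ℝ) + 1) / 2 - ((k : ℝ) + 1) * (r : ℝ) / ((t : ℝ) + 1) := by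
  obtain ⟨hmeas, hindep, hident, hatom⟩ := hX
  obtain ⟨s, rfl⟩ : ∃ s, t = s + 1 := ⟨t - 1, by omega⟩
  obtain ⟨n, rfl⟩ : ∃ n, k = n + 1 := ⟨k - 1, by omega⟩
  rw [Nat.add_sub_cancel] at hrs ⊢
  have hX1 : Measurable (X 1) := hmeas 1 (by simp)
  have : IsProbabilityMeasure (μ.map (X 1)) := Measure.isProbabilityMeasure_map hX1.aemeasurable
  have : NullSingletonClass (μ.map (X 1)) :=
    ⟨fun x => by rw [Measure.map_apply hX1 (measurableSet_singleton x)]; exact hatom 1 (by simp) x⟩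
  have hY : Measurable fun ω (j : Fin (n + 1)) => X (j + 1) ω :=
    measurable_pi_lambda _ fun j => hmeas _ (by simp)
  rw [relRank_event_eq_preimage X (s := s) htk.le]
  set c := Function.update rs (s + 1) r
  calc _ = ∫ ω, lastRankSubAbsRank (fun j : Fin (n + 1) => X (j + 1) ω) ⟨s, by omega⟩
        ∂μ[|(fun ω (j : Fin (n + 1)) => X (j + 1) ω) ⁻¹' {x | HasRelRanks (s + 1) c x}] :=
        integral_congr_ae (ae_of_all _ fun ω => relRank_sub_absRank_eq X ω ⟨s, by omega⟩)
    _ = ∫ x, lastRankSubAbsRank x ⟨s, by omega⟩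
        ∂(Measure.pi fun _ => μ.map (X 1))[|{x | HasRelRanks (s + 1) c x}] := by
      rw [← map_shift_eq_pi hmeas hindep hident, ← map_cond_preimage hY
        (measurableSet_hasRelRanks _ _), integral_map hY.aemeasurable
        (measurable_lastRankSubAbsRank _).aestronglyMeasurable]
    _ = (∑ ρ ∈ permsWithRelRanks (n + 1) (s + 1) c, lastRankSubAbsRank ρ ⟨s, by omega⟩) /
          #(permsWithRelRanks (n + 1) (s + 1) c) :=
      integral_cond_pi_eq_sum_div _ _
        (fun π x hx => by simp [permsWithRelRanks, hasRelRanks_congr (le_iff_of_mem_orderCell hx)])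
        fun π x hx => lastRankSubAbsRank_congr (le_iff_of_mem_orderCell hx) _
    _ = _ := by
      rw [average_lastRankSubAbsRank (by omega) (update_mem_Icc hr hrs), Function.update_self]
      push_cast
      ring
end
end
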